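/- arXiv:2506.18235 — 7 statements merged into one kernel-verified Lean document; each statement's English description precedes it below -/
import Mathlib

section
/- For all positive integers n and m and every tree T on n vertices, r(T, K_m) = (n − 1)(m − 1) + 1. -/
/-- `ContainsCopy G H`: the graph `G` contains a copy of the graph `H` (as a subgraph),
i.e. there is an injective map of the vertices of `H` into `G` carrying edges to edges. -/
def ContainsCopy {α β : Type*} (G : SimpleGraph α) (H : SimpleGraph β) : Prop :=
  ∃ f : β ↪ α, ∀ ⦃u v : β⦄, H.Adj u v → G.Adj (f u) (f v)

/-- `Arrows N H₁ H₂` : `K_N → (H₁, H₂)`, i.e. every red-blue coloring of the edges of the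
complete graph on `N` vertices (described by its graph `R` of red edges; the blue edges are
those of `Rᶜ`) contains a red copy of `H₁` or a blue copy of `H₂`. -/
def Arrows (N : ℕ) {α β : Type*} (H₁ : SimpleGraph α) (H₂ : SimpleGraph β) : Prop :=
  ∀ R : SimpleGraph (Fin N), ContainsCopy R H₁ ∨ ContainsCopy Rᶜ H₂

/-- The Ramsey number `r(H₁, H₂)`: the least `N` with `K_N → (H₁, H₂)`. -/
noncomputable def ramseyNumber {α β : Type*} (H₁ : SimpleGraph α) (H₂ : SimpleGraph β) : ℕ :=
  sInf {N | Arrows N H₁ H₂}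

/-- `tK t m` : the disjoint union of `t` copies of the complete graph `K_m`. -/
def tK (t m : ℕ) : SimpleGraph (Fin t × Fin m) :=
  SimpleGraph.fromRel (fun a b => a.1 = b.1)

/-- `starG k` : the star `K_{1,k}`, with center `none` and `k` leaves. -/
def starG (k : ℕ) : SimpleGraph (Option (Fin k)) :=
  SimpleGraph.fromRel (fun a _ => a = none)

/-- A red-blue coloring of a complete graph (described by its graph `R` of red edges; the blue
edges are those of `Rᶜ`) belongs to the family `𝒢_{n,m,t}` if the vertex set can be partitioned
into classes `A₁, …, A_{m-1}` of size `n-1` (labelled `some i`) and a class `B` of size `t-1`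
(labelled `none`) such that every edge inside some `Aᵢ` is red and every edge joining two
different classes is blue (edges inside `B` are arbitrary). -/
def GFamily (n m t : ℕ) {V : Type*} [Fintype V] (R : SimpleGraph V) : Prop :=
  ∃ f : V → Option (Fin (m - 1)),
    (∀ i : Fin (m - 1), (Finset.univ.filter fun v => f v = some i).card = n - 1) ∧
    ((Finset.univ.filter fun v => f v = none).card = t - 1) ∧
    (∀ u v : V, u ≠ v → ∀ i : Fin (m - 1), f u = some i → f v = some i → R.Adj u v) ∧
    (∀ u v : V, f u ≠ f v → ¬ R.Adj u v)

/-- `RedMatchingBetween R X Y k` : there are `k` pairwise vertex-disjoint red edges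
(edges of `R`) joining `X` to `Y`. -/
def RedMatchingBetween {V : Type*} (R : SimpleGraph V) (X Y : Finset V) (k : ℕ) : Prop :=
  ∃ e : Fin k → V × V,
    (∀ p, (e p).1 ∈ X ∧ (e p).2 ∈ Y ∧ R.Adj (e p).1 (e p).2) ∧
    (∀ p q, p ≠ q → (e p).1 ≠ (e q).1 ∧ (e p).1 ≠ (e q).2 ∧
      (e p).2 ≠ (e q).1 ∧ (e p).2 ≠ (e q).2)

/-- `IsBlueMatching R k e` : in the red-blue colored complete graph with red graph `R`,
the `k` pairs given by `e` form a blue matching (pairwise vertex-disjoint blue edges). -/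
def IsBlueMatching {V : Type*} (R : SimpleGraph V) (k : ℕ) (e : Fin k → V × V) : Prop :=
  (∀ p, (e p).1 ≠ (e p).2 ∧ ¬ R.Adj (e p).1 (e p).2) ∧
  (∀ p q, p ≠ q → (e p).1 ≠ (e q).1 ∧ (e p).1 ≠ (e q).2 ∧
    (e p).2 ≠ (e q).1 ∧ (e p).2 ≠ (e q).2)

/-- `KplusStar M k` : the complete graph on the `M` vertices `some j`, together with one
extra vertex `none` joined to exactly `k` of them (namely `some j` for `j < k`). -/
def KplusStar (M k : ℕ) : SimpleGraph (Option (Fin M)) :=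
  SimpleGraph.fromRel (fun a b =>
    (a ≠ none ∧ b ≠ none) ∨ (a = none ∧ ∃ j : Fin M, b = some j ∧ (j : ℕ) < k))

/-- `ArrowsOn H H₁ H₂` : `H → (H₁, H₂)`, i.e. every red-blue coloring of the edges of the
host graph `H` (red graph `R ≤ H`, blue graph `H \ R`) contains a red copy of `H₁` or a
blue copy of `H₂`. -/
def ArrowsOn {V α β : Type*} (H : SimpleGraph V) (H₁ : SimpleGraph α) (H₂ : SimpleGraph β) :
    Prop :=
  ∀ R : SimpleGraph V, R ≤ H → ContainsCopy R H₁ ∨ ContainsCopy (H \ R) H₂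

/-- The star-critical Ramsey number `r₊(H₁, H₂)`: the least `k` such that the graph obtained
from `K_{N-1}` by adding one new vertex joined to exactly `k` of its vertices arrows
`(H₁, H₂)`, where `N = r(H₁, H₂)`. -/
noncomputable def starCritRamsey {α β : Type*} (H₁ : SimpleGraph α) (H₂ : SimpleGraph β) : ℕ :=
  sInf {k | ArrowsOn (KplusStar (ramseyNumber H₁ H₂ - 1) k) H₁ H₂}

/-- The chromatic number of `H`, as a natural number. -/
noncomputable def chromNum {β : Type*} (H : SimpleGraph β) : ℕ :=
  H.chromaticNumber.toNat

/-- The chromatic surplus `s(H)`: the minimum cardinality of a color class over all proper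
colorings of `H` with `χ(H)` colors. -/
noncomputable def chromSurplus {β : Type*} [Fintype β] (H : SimpleGraph β) : ℕ :=
  sInf {s | ∃ C : H.Coloring (Fin (chromNum H)),
    s = sInf {k | ∃ i : Fin (chromNum H),
      k = (Finset.univ.filter fun v => C v = i).card}}

/-! Upper bound (Chvátal): induct on `m`. If some vertex has more than `(n - 1)(m - 2)` blue
neighbours, induct inside its blue neighbourhood, where a blue `K_{m-1}` extends to a blue `K_m`
through that vertex. Otherwise every vertex has red degree at least `n - 1`, and a tree on `n`
vertices embeds into any graph of minimum degree `n - 1`, leaf by leaf: the parent's image has a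
neighbour outside the `n - 2` vertices already used.

Lower bound: `m - 1` disjoint red copies of `K_{n-1}`, all other edges blue, contain neither a
connected red graph on `n` vertices nor a blue `K_m`. -/

open SimpleGraph Finset Fintype

theorem containsCopy_iff_isContained {α β : Type*} {G : SimpleGraph α} {H : SimpleGraph β} :
    ContainsCopy G H ↔ H ⊑ G :=
  ⟨fun ⟨f, hf⟩ => ⟨⟨⟨f, fun h => hf h⟩, f.injective⟩⟩,
    fun ⟨c⟩ => ⟨c.toEmbedding, fun _ _ h => c.toHom.map_adj h⟩⟩

section Arrows

variable {α β : Type*} {H₁ : SimpleGraph α} {H₂ : SimpleGraph β} {N : ℕ}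

theorem Arrows.isContained_or_of_le_card {V : Type*} [Fintype V] (h : Arrows N H₁ H₂)
    (hN : N ≤ card V) (R : SimpleGraph V) : H₁ ⊑ R ∨ H₂ ⊑ Rᶜ := by
  let f : Fin N ↪ V := (Fin.castLEEmb hN).trans (equivFin V).symm.toEmbedding
  refine (h (R.comap f)).imp (fun h₁ => ?_) (fun h₂ => ?_)
  · exact (containsCopy_iff_isContained.1 h₁).trans (Embedding.comap f R).isContained
  · exact (containsCopy_iff_isContained.1 h₂).trans
      ⟨⟨⟨f, fun huv => ⟨f.injective.ne huv.1, huv.2⟩⟩, f.injective⟩⟩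

theorem Arrows.mono {M : ℕ} (h : Arrows N H₁ H₂) (hNM : N ≤ M) : Arrows M H₁ H₂ := fun R => by
  simpa only [containsCopy_iff_isContained] using
    h.isContained_or_of_le_card (by simpa using hNM) R

theorem ramseyNumber_eq_succ (hup : Arrows (N + 1) H₁ H₂) (hlow : ¬ Arrows N H₁ H₂) :
    ramseyNumber H₁ H₂ = N + 1 :=
  (Nat.sInf_upward_closed_eq_succ_iff (fun _ _ hle h => h.mono hle) N).2 ⟨hup, hlow⟩

end Arrows

namespace SimpleGraph

variable {α V : Type*} {T : SimpleGraph α}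

section TreeEmbedding

variable {G : SimpleGraph V}

theorem exists_adj_notMem_of_card_le_degree [G.LocallyFinite] [DecidableEq V] {s : Finset V}
    {v : V} (hv : v ∈ s) (hs : #s ≤ G.degree v) : ∃ y, G.Adj v y ∧ y ∉ s := by
  have hlt : #(s.erase v) < #(G.neighborFinset v) := by
    rw [card_erase_of_mem hv, card_neighborFinset_eq_degree]
    have := card_pos.2 ⟨v, hv⟩
    omega
  obtain ⟨y, hy, hys⟩ := exists_mem_notMem_of_card_lt_card hlt
  rw [mem_neighborFinset] at hy
  exact ⟨y, hy, fun hys' => hys (mem_erase.2 ⟨hy.ne', hys'⟩)⟩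

theorem isContained_of_copy_induce_compl_leaf {ℓ : α} {p : ({ℓ}ᶜ : Set α)}
    (hp : ∀ x, T.Adj ℓ x ↔ x = p) (f : Copy (T.induce {ℓ}ᶜ) G) {y : V} (hy : ∀ a, f a ≠ y)
    (hpy : G.Adj (f p) y) : T ⊑ G := by
  classical
  let g (a : α) : V := if h : a = ℓ then y else f ⟨a, h⟩
  have hg : ∀ a (h : a ≠ ℓ), g a = f ⟨a, h⟩ := fun _ h => dif_neg h
  have hgℓ : g ℓ = y := dif_pos rfl
  have hgp : ∀ a, T.Adj ℓ a → G.Adj (g ℓ) (g a) := fun a ha => by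
    obtain rfl := (hp a).1 ha
    rw [hgℓ, hg _ p.2]
    exact hpy.symm
  have hginj : Function.Injective g := fun a b hab => by
    by_cases ha : a = ℓ <;> by_cases hb : b = ℓ
    · exact ha.trans hb.symm
    · exact absurd (hgℓ ▸ ha ▸ hab.trans (hg b hb)).symm (hy _)
    · exact absurd (hgℓ ▸ hb ▸ hab.symm.trans (hg a ha)).symm (hy _)
    · rw [hg a ha, hg b hb] at hab
      exact congrArg Subtype.val (f.injective hab)
  refine ⟨⟨⟨g, fun {a b} hab => ?_⟩, hginj⟩⟩
  by_cases ha : a = ℓ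
  · exact ha ▸ hgp b (ha ▸ hab)
  by_cases hb : b = ℓ
  · exact (hb ▸ hgp a (hb ▸ hab.symm)).symm
  rw [hg a ha, hg b hb]
  exact f.toHom.map_adj hab

theorem IsTree.isContained_of_card_sub_one_le_degree [Finite α] [G.LocallyFinite] [Nonempty V]
    (hT : T.IsTree) (hG : ∀ v, Nat.card α - 1 ≤ G.degree v) : T ⊑ G := by
  induction α using Finite.induction_subsingleton_or_nontrivial with
  | hbase α =>
    exact ⟨⟨⟨fun _ => Classical.arbitrary V, fun hab => (hab.ne (Subsingleton.elim _ _)).elim⟩,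
      fun _ _ _ => Subsingleton.elim _ _⟩⟩
  | hstep α ih =>
    classical
    have := Fintype.ofFinite α
    obtain ⟨ℓ, hℓ⟩ := hT.exists_vert_degree_one_of_nontrivial
    obtain ⟨p, hℓp, hp⟩ := degree_eq_one_iff_existsUnique_adj.1 hℓ
    have hcard : Nat.card ({ℓ}ᶜ : Set α) = Nat.card α - 1 := by
      rw [Nat.card_coe_set_eq, Set.ncard_compl, Set.ncard_singleton]
    have hT' : (T.induce {ℓ}ᶜ).IsTree :=
      ⟨hT.connected.induce_compl_singleton_of_degree_eq_one hℓ, hT.isAcyclic.induce _⟩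
    obtain ⟨f⟩ := ih _ (hcard ▸ Nat.sub_lt Nat.card_pos one_pos) hT'
      (fun v => hcard ▸ (Nat.sub_le _ 1).trans (hG v))
    let p' : ({ℓ}ᶜ : Set α) := ⟨p, hℓp.ne'⟩
    obtain ⟨y, hpy, hy⟩ := exists_adj_notMem_of_card_le_degree (v := f p')
      (mem_map_of_mem f.toEmbedding (mem_univ p'))
      (by rw [card_map, card_univ, ← Nat.card_eq_fintype_card, hcard]; exact hG _)
    exact isContained_of_copy_induce_compl_leaf (p := p') (fun x => ⟨hp x, fun h => h ▸ hℓp⟩) f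
      (fun a h => hy (mem_map.2 ⟨a, mem_univ a, h⟩)) hpy

end TreeEmbedding

section Chvatal

variable [Fintype V] {R B : SimpleGraph V}

theorem card_sub_one_le_degree_add_degree [DecidableEq V] [DecidableRel R.Adj]
    [DecidableRel B.Adj] (hRB : R ⊔ B = ⊤) (v : V) :
    card V - 1 ≤ R.degree v + B.degree v :=
  calc card V - 1 = (⊤ : SimpleGraph V).degree v := (complete_graph_degree v).symm
    _ ≤ (R ⊔ B).degree v := degree_le_of_le hRB.ge
    _ = #(R.neighborFinset v ∪ B.neighborFinset v) := by
      rw [← card_neighborFinset_eq_degree, neighborFinset_sup]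
    _ ≤ R.degree v + B.degree v := card_union_le _ _

theorem IsTree.isContained_or_not_cliqueFree [Finite α] (hT : T.IsTree) (hRB : R ⊔ B = ⊤)
    (m : ℕ) (hV : (Nat.card α - 1) * m < card V) :
    T ⊑ R ∨ ¬ B.CliqueFree (m + 1) := by
  classical
  induction m generalizing V with
  | zero =>
    have : Nonempty V := card_pos_iff.1 (by simpa using hV)
    exact Or.inr (by simp [cliqueFree_one])
  | succ m ih =>
    by_cases hbig : ∃ v, (Nat.card α - 1) * m < B.degree v
    · obtain ⟨v, hv⟩ := hbig
      let s := B.neighborSet v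
      have hs : R.induce s ⊔ B.induce s = ⊤ := by
        ext a b
        simpa [Subtype.ext_iff] using congrArg (fun G : SimpleGraph V => G.Adj a b) hRB
      rcases ih hs (by rwa [card_neighborSet_eq_degree]) with hR | hB
      · exact Or.inl (hR.trans ⟨Copy.induce R s⟩)
      · obtain ⟨t, ht⟩ : ∃ t, (B.induce s).IsNClique (m + 1) t := by
          simpa [CliqueFree] using hB
        have ht' := (ht.map (f := Function.Embedding.subtype _)).mono (map_comap_le _ _)
        refine Or.inr (ht'.insert (a := v) fun b hb => ?_).not_cliqueFree
        obtain ⟨a, -, rfl⟩ := mem_map.1 hb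
        exact a.2
    · simp only [not_exists, not_lt] at hbig
      have : Nonempty V := card_pos_iff.1 (by omega)
      refine Or.inl (hT.isContained_of_card_sub_one_le_degree fun v => ?_)
      have := card_sub_one_le_degree_add_degree hRB v
      have := hbig v
      rw [Nat.mul_succ] at hV
      omega

end Chvatal

section DisjointCliques

variable {t m : ℕ}

theorem tK_adj {x y : Fin t × Fin m} : (tK t m).Adj x y ↔ x ≠ y ∧ x.1 = y.1 := by
  simp [tK, eq_comm]

theorem fst_eq_of_reachable_tK {x y : Fin t × Fin m} (h : (tK t m).Reachable x y) :
    x.1 = y.1 := by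
  obtain ⟨w⟩ := h
  induction w with
  | nil => rfl
  | cons hadj _ ih => exact (tK_adj.1 hadj).2.trans ih

theorem Connected.not_isContained_tK [Fintype α] (hT : T.Connected) (hm : m < card α) :
    ¬ T ⊑ tK t m := by
  rintro ⟨f⟩
  have hsnd : Function.Injective fun a => (f a).2 := fun a b hab =>
    f.injective (Prod.ext (fst_eq_of_reachable_tK ((hT a b).map f.toHom)) hab)
  exact hm.not_ge (by simpa using card_le_of_injective _ hsnd)

theorem top_not_isContained_compl_tK [Fintype α] (ht : t < card α) :
    ¬ (⊤ : SimpleGraph α) ⊑ (tK t m)ᶜ := by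
  rintro ⟨f⟩
  have hfst : Function.Injective fun a => (f a).1 := fun a b hab => by
    by_contra hne
    exact (f.toHom.map_adj hne).2 (tK_adj.2 ⟨f.injective.ne hne, hab⟩)
  exact ht.not_ge (by simpa using card_le_of_injective _ hfst)

end DisjointCliques

end SimpleGraph

theorem tree_Km_ramsey_general (n m : ℕ) (hm : 1 ≤ m)
    (T : SimpleGraph (Fin n)) (hT : T.IsTree) :
    ramseyNumber T (⊤ : SimpleGraph (Fin m)) = (n - 1) * (m - 1) + 1 := by
  have hn : 0 < n := Fin.pos_iff_nonempty.2 hT.connected.nonempty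
  refine ramseyNumber_eq_succ (fun R => ?_) fun h => ?_
  · have h := hT.isContained_or_not_cliqueFree (R := R) sup_compl_eq_top (m - 1) (by simp)
    rw [Nat.sub_add_cancel hm, not_cliqueFree_iff_top_isContained] at h
    simpa only [containsCopy_iff_isContained] using h
  · rcases h.isContained_or_of_le_card (V := Fin (m - 1) × Fin (n - 1)) (by simp [mul_comm])
      (tK _ _) with hR | hB
    · exact hT.connected.not_isContained_tK (by simp; omega) hR
    · exact top_not_isContained_compl_tK (by simp; omega) hB

/-- **Chvátal's theorem.** For all positive integers `n` and `m` and every tree `T` on `n`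
vertices, `r(T, K_m) = (n − 1)(m − 1) + 1`. -/
theorem tree_Km_ramsey (n m : ℕ) (hn : 1 ≤ n) (hm : 1 ≤ m)
    (T : SimpleGraph (Fin n)) (hT : T.IsTree) :
    ramseyNumber T (⊤ : SimpleGraph (Fin m)) = (n - 1) * (m - 1) + 1 :=
  tree_Km_ramsey_general n m hm T hT
end

section
/- For all positive integers m and t there exists n₀ such that for every n ≥ n₀, every tree T on n vertices, and every red-blue edge-coloring of the complete graph on (n − 1)(m − 1) + t − 1 vertices belonging to the family 𝒢_{n,m,t}, the coloring contains no red copy of T and no blue copy of tK_m. -/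
open Finset

theorem SimpleGraph.Reachable.apply_eq_of_forall_adj {V γ : Type*} {G : SimpleGraph V}
    {g : V → γ} (hg : ∀ ⦃u v⦄, G.Adj u v → g u = g v) {u v : V} (huv : G.Reachable u v) :
    g u = g v := by
  obtain ⟨w⟩ := huv
  induction w with
  | nil => rfl
  | cons h _ ih => exact (hg h).trans ih

section ClassFibers

variable {V ι β : Type*}

theorem card_le_card_fiber_of_embedding [Fintype V] [DecidableEq ι] [Fintype β] {f : V → ι}
    (g : β ↪ V) {c : ι} (hg : ∀ b, f (g b) = c) : Fintype.card β ≤ #{v | f v = c} := by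
  simpa using Finset.card_le_card_of_injOn g (s := univ) (fun b _ => by simp [hg b])
    g.injective.injOn

theorem exists_card_le_card_fiber_of_containsCopy [Fintype V] [DecidableEq ι] [Fintype β]
    {f : V → ι} {R : SimpleGraph V} {T : SimpleGraph β} (hT : T.Connected) (hR : ∀ ⦃u v⦄, R.Adj u v → f u = f v)
    (hcopy : ContainsCopy R T) : ∃ c, Fintype.card β ≤ #{v | f v = c} := by
  obtain ⟨g, hg⟩ := hcopy
  obtain ⟨b₀⟩ := hT.nonempty
  refine ⟨f (g b₀), card_le_card_fiber_of_embedding g fun b => ?_⟩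
  exact ((hT.preconnected b b₀).map ⟨g, fun h => hg h⟩).apply_eq_of_forall_adj hR

variable {R : SimpleGraph V} {f : V → Option ι}

theorem exists_apply_eq_none_of_pairwise_adj_compl [Fintype ι] {m : ℕ}
    (hm : Fintype.card ι < m) (hR : ∀ u v, u ≠ v → ∀ i, f u = some i → f v = some i → R.Adj u v)
    {g : Fin m → V} (hg : Pairwise fun j k => Rᶜ.Adj (g j) (g k)) : ∃ j, f (g j) = none := by
  by_contra! hsome
  have hclass : ∀ j, ∃ i, f (g j) = some i := fun j => Option.ne_none_iff_exists'.mp (hsome j)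
  choose h hh using hclass
  have hinj : Function.Injective h := by
    intro j k hjk
    by_contra hne
    have hblue := hg hne
    exact hblue.2 (hR _ _ hblue.ne (h j) (hh j) (hjk ▸ hh k))
  have := Fintype.card_le_of_injective h hinj
  simp only [Fintype.card_fin] at this
  omega

theorem card_le_card_fiber_none_of_containsCopy_tK [Fintype V] [Fintype ι] [DecidableEq ι] {t m : ℕ}
    (hm : Fintype.card ι < m) (hR : ∀ u v, u ≠ v → ∀ i, f u = some i → f v = some i → R.Adj u v)
    (hcopy : ContainsCopy Rᶜ (tK t m)) : t ≤ #{v | f v = none} := by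
  obtain ⟨g, hg⟩ := hcopy
  have hB : ∀ k : Fin t, ∃ j, f (g (k, j)) = none := fun k =>
    exists_apply_eq_none_of_pairwise_adj_compl hm hR fun j j' hjj' =>
      hg (SimpleGraph.fromRel_adj _ _ _ |>.mpr ⟨by simpa using hjj', Or.inl rfl⟩)
  choose b hb using hB
  let e : Fin t ↪ V := ⟨fun k => g (k, b k), fun k k' h => congrArg Prod.fst (g.injective h)⟩
  simpa using card_le_card_fiber_of_embedding e hb

end ClassFibers

/-- For all positive integers `m` and `t` there exists `n₀` such that for every `n ≥ n₀`,
every tree `T` on `n` vertices and every red-blue edge-coloring of the complete graph on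
`(n − 1)(m − 1) + t − 1` vertices belonging to the family `𝒢_{n,m,t}`, the coloring contains
no red copy of `T` and no blue copy of `tK_m`. -/
theorem gfamily_is_critical (m t : ℕ) (hm : 1 ≤ m) (ht : 1 ≤ t) :
    ∃ n₀ : ℕ, ∀ n : ℕ, n₀ ≤ n → ∀ T : SimpleGraph (Fin n), T.IsTree →
      ∀ R : SimpleGraph (Fin ((n - 1) * (m - 1) + t - 1)),
        GFamily n m t R →
        ¬ ContainsCopy R T ∧ ¬ ContainsCopy Rᶜ (tK t m) := by
  refine ⟨t, fun n hn T hT R ⟨f, hA, hB, hred, hblue⟩ => ⟨fun hcopy => ?_, fun hcopy => ?_⟩⟩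
  · have hR : ∀ ⦃u v⦄, R.Adj u v → f u = f v := fun u v huv => by_contra fun h => hblue u v h huv
    obtain ⟨c, hc⟩ := exists_card_le_card_fiber_of_containsCopy hT.connected hR hcopy
    rw [Fintype.card_fin] at hc
    cases c with
    | none => omega
    | some i => rw [hA i] at hc; omega
  · have := card_le_card_fiber_none_of_containsCopy_tK (by simp only [Fintype.card_fin]; omega)
      hred hcopy
    omega
end

section
/- For all positive integers m ≥ 2 and t there exists n₀ such that for every n ≥ n₀ and every tree T on n vertices, there is a red-blue edge-coloring of the graph obtained from the complete graph on (n − 1)(m − 1) + t − 1 vertices by adding one new vertex joined to exactly (n − 1)(m − 2) + t − 1 of its vertices, such that the coloring contains no red copy of T and no blue copy of tK_m. -/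
/-- For all positive integers `m ≥ 2` and `t` there exists `n₀` such that for every `n ≥ n₀`
and every tree `T` on `n` vertices, there is a red-blue edge-coloring of the graph obtained
from the complete graph on `(n − 1)(m − 1) + t − 1` vertices by adding one new vertex joined
to exactly `(n − 1)(m − 2) + t − 1` of its vertices, with no red copy of `T` and no blue copy
of `tK_m`. -/
theorem starCritical_lower (m t : ℕ) (hm : 2 ≤ m) (ht : 1 ≤ t) :
    ∃ n₀ : ℕ, ∀ n : ℕ, n₀ ≤ n → ∀ T : SimpleGraph (Fin n), T.IsTree →
      ∃ R : SimpleGraph (Option (Fin ((n - 1) * (m - 1) + t - 1))),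
        R ≤ KplusStar ((n - 1) * (m - 1) + t - 1) ((n - 1) * (m - 2) + t - 1) ∧
        ¬ ContainsCopy R T ∧
        ¬ ContainsCopy
          (KplusStar ((n - 1) * (m - 1) + t - 1) ((n - 1) * (m - 2) + t - 1) \ R)
          (tK t m) := by
  classical
  refine ⟨t + 2, ?_⟩
  intro n hn T hT
  set M := (n - 1) * (m - 1) + t - 1 with hMdef
  set k := (n - 1) * (m - 2) + t - 1 with hkdef
  have hn1 : 0 < n - 1 := by omega
  have hmul : (n-1) * (m-1) = (n-1)*(m-2) + (n-1) := by
    have h1 : m - 1 = (m - 2) + 1 := by omega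
    rw [h1, Nat.mul_succ]
  have hMk : M = k + (n - 1) := by omega
  have hkB : k = (m - 2) * (n - 1) + (t - 1) := by
    have := Nat.mul_comm (n-1) (m-2); omega
  set cval : Fin M → ℕ :=
    fun j => if (j : ℕ) < k then min ((j : ℕ) / (n - 1)) (m - 2) else m - 1 with hcval
  set R : SimpleGraph (Option (Fin M)) :=
    SimpleGraph.fromRel (fun u v => ∃ a b, u = some a ∧ v = some b ∧ cval a = cval b) with hRdef
  -- basic facts about cval
  have cval_lt : ∀ a : Fin M, (a : ℕ) < k → cval a ≤ m - 2 := by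
    intro a h; simp only [hcval]; rw [if_pos h]; exact min_le_right _ _
  have cval_ge : ∀ a : Fin M, ¬ (a : ℕ) < k → cval a = m - 1 := by
    intro a h; simp only [hcval]; rw [if_neg h]
  have cval_le : ∀ a : Fin M, cval a ≤ m - 1 := by
    intro a; by_cases h : (a : ℕ) < k
    · have := cval_lt a h; omega
    · rw [cval_ge a h]
  -- R only joins some's of equal cval
  have hsome : ∀ x y, R.Adj x y →
      ∃ c d, x = some c ∧ y = some d ∧ cval c = cval d := by
    intro x y hxy
    rw [hRdef, SimpleGraph.fromRel_adj] at hxy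
    rcases hxy with ⟨-, ⟨a, b, h1, h2, h3⟩ | ⟨a, b, h1, h2, h3⟩⟩
    · exact ⟨a, b, h1, h2, h3⟩
    · exact ⟨b, a, h2, h1, h3.symm⟩
  -- cardinality bounds on fibers of cval
  have card_aux : ∀ (P : Fin M → Prop) [DecidablePred P] (c bound : ℕ),
      (∀ a : Fin M, P a → c ≤ (a : ℕ) ∧ (a : ℕ) < c + bound) →
      (Finset.univ.filter fun a => P a).card ≤ bound := by
    intro P _ c bound hP
    calc (Finset.univ.filter fun a => P a).card ≤ (Finset.range bound).card := by
          refine Finset.card_le_card_of_injOn (fun a => (a : ℕ) - c) ?_ ?_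
          · intro a ha
            have := hP a (Finset.mem_filter.mp ha).2
            simp only [Finset.mem_coe, Finset.mem_range]; omega
          · intro a ha b hb hab
            have h1 := hP a (Finset.mem_filter.mp ha).2
            have h2 := hP b (Finset.mem_filter.mp hb).2
            have hab' : (a : ℕ) - c = (b : ℕ) - c := hab
            exact Fin.ext (by omega)
      _ = bound := Finset.card_range bound
  have fiberB_le : (Finset.univ.filter fun a : Fin M => cval a = m - 2).card ≤ t - 1 := by
    apply card_aux _ ((m - 2) * (n - 1)) (t - 1)
    intro a ha
    have hak : (a : ℕ) < k := by
      by_contra h; have := cval_ge a h; omega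
    have hmin : m - 2 ≤ (a : ℕ) / (n - 1) := by
      have h2 := ha
      simp only [hcval, if_pos hak] at h2
      have hl := min_le_left ((a : ℕ) / (n - 1)) (m - 2)
      omega
    have := (Nat.le_div_iff_mul_le hn1).mp hmin
    omega
  have fiber_le : ∀ w : ℕ,
      (Finset.univ.filter fun a : Fin M => cval a = w).card ≤ n - 1 := by
    intro w
    by_cases hw1 : w = m - 1
    · apply card_aux _ k (n - 1)
      intro a ha
      have hak : ¬ (a : ℕ) < k := by
        intro h; have := cval_lt a h; omega
      have := a.isLt
      constructor <;> omega
    · by_cases hw2 : w = m - 2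
      · subst hw2; exact le_trans fiberB_le (by omega)
      · apply card_aux _ (w * (n - 1)) (n - 1)
        intro a ha
        have hak : (a : ℕ) < k := by
          by_contra h; have := cval_ge a h; omega
        simp only [hcval, if_pos hak] at ha
        have hdiv : (a : ℕ) / (n - 1) = w := by
          rcases le_total ((a : ℕ) / (n - 1)) (m - 2) with h | h
          · rw [min_eq_left h] at ha; exact ha
          · rw [min_eq_right h] at ha; omega
        have h1 : w * (n - 1) ≤ (a : ℕ) :=
          (Nat.le_div_iff_mul_le hn1).mp (le_of_eq hdiv.symm)
        have h2 : (a : ℕ) < (w + 1) * (n - 1) :=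
          (Nat.div_lt_iff_lt_mul hn1).mp (by omega)
        have h3 : (w + 1) * (n - 1) = w * (n - 1) + (n - 1) := by rw [Nat.succ_mul]
        exact ⟨h1, by omega⟩
  refine ⟨R, ?_, ?_, ?_⟩
  · -- R ≤ KplusStar
    intro u v h
    obtain ⟨c, d, rfl, rfl, -⟩ := hsome _ _ h
    have hne := h.ne
    exact (SimpleGraph.fromRel_adj _ _ _).mpr
      ⟨hne, Or.inl (Or.inl ⟨Option.some_ne_none _, Option.some_ne_none _⟩)⟩
  · -- no red tree
    rintro ⟨f, hf⟩
    have hn2 : 2 ≤ n := by omega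
    obtain ⟨u₀, v₁, hadj₀⟩ : ∃ u v : Fin n, T.Adj u v := by
      obtain ⟨p⟩ := hT.isConnected.preconnected ⟨0, by omega⟩ ⟨1, by omega⟩
      have hne : (⟨0, by omega⟩ : Fin n) ≠ ⟨1, by omega⟩ := by
        intro h; exact absurd (congrArg Fin.val h) (by simp)
      obtain ⟨u', h, q, -⟩ :=
        SimpleGraph.Walk.not_nil_iff.mp (SimpleGraph.Walk.not_nil_of_ne (p := p) hne)
      exact ⟨_, _, h⟩
    obtain ⟨a₀, d₀, hfu₀, -, -⟩ := hsome _ _ (hf hadj₀)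
    set w₀ := cval a₀ with hw₀
    have step : ∀ u v : Fin n, T.Adj u v →
        (∃ a, f u = some a ∧ cval a = w₀) → ∃ a, f v = some a ∧ cval a = w₀ := by
      rintro u v huv ⟨a, hfu, hwa⟩
      obtain ⟨c, d, h1, h2, h3⟩ := hsome _ _ (hf huv)
      refine ⟨d, h2, ?_⟩
      rw [hfu] at h1
      have hca : c = a := (Option.some.inj h1).symm
      subst hca
      omega
    have walkP : ∀ (x y : Fin n) (p : T.Walk x y),
        (∃ a, f x = some a ∧ cval a = w₀) → ∃ a, f y = some a ∧ cval a = w₀ := by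
      intro x y p
      induction p with
      | nil => exact id
      | cons h q ih => exact fun hx => ih (step _ _ h hx)
    have hall : ∀ v : Fin n, ∃ a, f v = some a ∧ cval a = w₀ := fun v =>
      (hT.isConnected.preconnected u₀ v).elim fun p => walkP _ _ p ⟨a₀, hfu₀, rfl⟩
    choose F hF1 hF2 using hall
    have hFinj : Function.Injective F := by
      intro u v h
      apply f.injective
      rw [hF1, hF1, h]
    have hcard := Finset.card_le_card_of_injOn F
      (s := (Finset.univ : Finset (Fin n)))
      (t := Finset.univ.filter fun a : Fin M => cval a = w₀)
      (fun v _ => Finset.mem_filter.mpr ⟨Finset.mem_univ _, hF2 v⟩)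
      (fun u _ v _ h => hFinj h)
    rw [Finset.card_univ, Fintype.card_fin] at hcard
    have := fiber_le w₀
    omega
  · -- no blue tK
    rintro ⟨f, hf⟩
    have hb1 : ∀ a b : Fin M,
        (KplusStar M k \ R).Adj (some a) (some b) → cval a ≠ cval b := by
      intro a b h hc
      rw [SimpleGraph.sdiff_adj] at h
      apply h.2
      rw [hRdef]
      exact (SimpleGraph.fromRel_adj _ _ _).mpr ⟨h.1.ne, Or.inl ⟨a, b, rfl, rfl, hc⟩⟩
    have hb2 : ∀ b : Fin M, (KplusStar M k \ R).Adj none (some b) → (b : ℕ) < k := by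
      intro b h
      have h1 := h.1
      simp only [KplusStar, SimpleGraph.fromRel_adj] at h1
      rcases h1 with ⟨-, h1 | h1⟩
      · rcases h1 with ⟨hx, -⟩ | ⟨-, j, hj, hjk⟩
        · exact absurd rfl hx
        · rw [Option.some.inj hj]; exact hjk
      · rcases h1 with ⟨-, hx⟩ | ⟨hx, -⟩
        · exact absurd rfl hx
        · exact absurd hx (Option.some_ne_none _)
    have rowB : ∀ i : Fin t, ∃ a : Fin M, cval a = m - 2 ∧ ∃ j : Fin m, f (i, j) = some a := by
      intro i
      set g : Fin m → ℕ := fun j => (f (i, j)).elim (m - 1) cval with hg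
      have hadjf : ∀ j₁ j₂ : Fin m, j₁ ≠ j₂ →
          (KplusStar M k \ R).Adj (f (i, j₁)) (f (i, j₂)) := by
        intro j₁ j₂ hne
        apply hf
        refine (SimpleGraph.fromRel_adj _ _ _).mpr ⟨?_, Or.inl rfl⟩
        simp [Prod.ext_iff, hne]
      have hglt : ∀ j, g j < m := by
        intro j
        simp only [hg]
        cases hfa : f (i, j) with
        | none => simp only [Option.elim_none]; omega
        | some a => simp only [Option.elim_some]; have := cval_le a; omega
      have hginj : Function.Injective g := by
        intro j₁ j₂ hgj
        by_contra hne
        have hbadj := hadjf j₁ j₂ hne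
        simp only [hg] at hgj
        cases h1 : f (i, j₁) with
        | none =>
          cases h2 : f (i, j₂) with
          | none => exact hne (congrArg Prod.snd (f.injective (h1.trans h2.symm)))
          | some b =>
            rw [h1, h2] at hbadj hgj
            simp only [Option.elim_none, Option.elim_some] at hgj
            have hbk := hb2 b hbadj
            have := cval_lt b hbk
            omega
        | some a =>
          cases h2 : f (i, j₂) with
          | none =>
            rw [h1, h2] at hbadj hgj
            simp only [Option.elim_none, Option.elim_some] at hgj
            have hbk := hb2 a hbadj.symm
            have := cval_lt a hbk
            omega
          | some b =>
            rw [h1, h2] at hbadj hgj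
            simp only [Option.elim_some] at hgj
            exact hb1 a b hbadj hgj
      have himg : Finset.image g Finset.univ = Finset.range m := by
        apply Finset.eq_of_subset_of_card_le
        · intro x hx
          obtain ⟨j, -, rfl⟩ := Finset.mem_image.mp hx
          exact Finset.mem_range.mpr (hglt j)
        · rw [Finset.card_range, Finset.card_image_of_injective _ hginj,
            Finset.card_univ, Fintype.card_fin]
      have hmem : m - 2 ∈ Finset.image g Finset.univ := by
        rw [himg]; exact Finset.mem_range.mpr (by omega)
      obtain ⟨j₀, -, hj₀⟩ := Finset.mem_image.mp hmem
      simp only [hg] at hj₀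
      cases hf0 : f (i, j₀) with
      | none => rw [hf0] at hj₀; simp only [Option.elim_none] at hj₀; omega
      | some a =>
        rw [hf0] at hj₀
        simp only [Option.elim_some] at hj₀
        exact ⟨a, hj₀, j₀, hf0⟩
    choose A hA hj using rowB
    have hAinj : Function.Injective A := by
      intro i₁ i₂ h
      obtain ⟨j₁, h₁⟩ := hj i₁
      obtain ⟨j₂, h₂⟩ := hj i₂
      have := f.injective (h₁.trans (by rw [h, ← h₂]))
      exact (Prod.ext_iff.mp this).1
    have hcard := Finset.card_le_card_of_injOn A
      (s := (Finset.univ : Finset (Fin t)))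
      (t := Finset.univ.filter fun a : Fin M => cval a = m - 2)
      (fun i _ => Finset.mem_filter.mpr ⟨Finset.mem_univ _, hA i⟩)
      (fun u _ v _ h => hAinj h)
    rw [Finset.card_univ, Fintype.card_fin] at hcard
    omega
end

section
/- Let n, m, t be positive integers with m ≥ 2 and t ≥ 2, and let G be a red-blue edge-colored complete graph on (n − 1)(m − 1) + t − 1 vertices containing no blue copy of tK_m, whose vertex set is partitioned into sets A₁, …, A_{n−1} such that |A_i| = m − 1 for each i ∈ {1, …, n−t}, |A_i| = m for each i ∈ {n−t+1, …, n−1}, and every edge inside each A_i is blue. Then: (1) for all distinct i, j ∈ {1, …, n−t} there are m − 1 pairwise vertex-disjoint red edges between A_i and A_j; and (2) if instead the partition satisfies, for some set D ⊆ {1, …, n−1} of size t − 1, that |A_k| = m for each k ∈ D and |A_k| = m − 1 for each k ∉ D (with all A_k blue cliques and no blue tK_m), then for all distinct i', j' ∉ D there are m − 1 pairwise vertex-disjoint red edges between A_{i'} and A_{j'}. -/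
/-! By Hall's theorem, if two classes `X`, `Y` of size `m - 1` admit no red matching of size
`m - 1`, some `S ⊆ X` has fewer than `|S|` red neighbours in `Y`. Then `S` together with its
red non-neighbours in `Y` is a blue clique of size at least `m`, disjoint from the `t - 1`
classes of size `m`: these are `t` disjoint blue copies of `K_m`. -/

open Finset Function

variable {V : Type*}

lemma pairwise_disjoint_of_existsUnique_mem {ι : Type*} {A : ι → Finset V}
    (h : ∀ v, ∃! i, v ∈ A i) : Pairwise (Disjoint on A) :=
  fun _ _ hab => disjoint_left.mpr fun v hva hvb => hab ((h v).unique hva hvb)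

lemma containsCopy_tK_of_isNClique {G : SimpleGraph V} {ι : Type*} [Fintype ι] {t m : ℕ}
    (B : ι → Finset V) (hι : Fintype.card ι = t) (hdisj : Pairwise (Disjoint on B))
    (hB : ∀ a, G.IsNClique m (B a)) : ContainsCopy G (tK t m) := by
  let e : Fin t ≃ ι := (Fintype.equivFinOfCardEq hι).symm
  let g : ∀ a, Fin m ≃ B a := fun a => ((B a).equivFinOfCardEq (hB a).card_eq).symm
  have hsame : ∀ {a b : Fin t} {j k : Fin m}, (g (e a) j : V) = g (e b) k → a = b :=
    fun {a b} j k h => by_contra fun hab =>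
      disjoint_left.mp (hdisj (e.injective.ne hab)) (g (e a) j).2 (h ▸ (g (e b) k).2)
  refine ⟨⟨fun p => g (e p.1) p.2, ?_⟩, ?_⟩
  · rintro ⟨a, j⟩ ⟨b, k⟩ h
    obtain rfl := hsame h
    exact Prod.ext rfl ((g _).injective (Subtype.ext h))
  · rintro ⟨a, j⟩ ⟨b, k⟩ ⟨hne, hab⟩
    obtain rfl : a = b := hab.elim id Eq.symm
    have hjk : j ≠ k := fun h => hne (by rw [h])
    exact (hB (e a)).isClique (g _ j).2 (g _ k).2 fun h => hjk ((g _).injective (Subtype.ext h))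

variable [DecidableEq V] (R : SimpleGraph V)

lemma redMatchingBetween_of_hall [DecidableRel R.Adj] {X Y : Finset V} {k : ℕ}
    (hXY : Disjoint X Y) (hX : #X = k)
    (hall : ∀ S ⊆ X, #S ≤ #{b ∈ Y | ∃ a ∈ S, R.Adj a b}) :
    RedMatchingBetween R X Y k := by
  obtain ⟨f, hf_inj, hf⟩ := (all_card_le_biUnion_card_iff_exists_injective
    fun a : X => {b ∈ Y | R.Adj a b}).mp fun s => by
      convert hall (s.map (Embedding.subtype _)) (fun _ => property_of_mem_map_subtype s) using 1
      · simp
      · congr 1; ext; simp only [mem_biUnion, mem_filter, mem_map]; aesop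
  simp only [mem_filter] at hf
  let g : Fin k ≃ X := (X.equivFinOfCardEq hX).symm
  refine ⟨fun p => (g p, f (g p)), fun p => ⟨(g p).2, hf (g p)⟩, fun p q hpq => ?_⟩
  have hgpq : g p ≠ g q := g.injective.ne hpq
  refine ⟨fun h => hgpq (Subtype.ext h), fun h => ?_, fun h => ?_, fun h => hgpq (hf_inj h)⟩
  · exact disjoint_left.mp hXY (g p).2 ((congrArg (· ∈ Y) h).mpr (hf (g q)).1)
  · exact disjoint_left.mp hXY (g q).2 ((congrArg (· ∈ Y) h).mp (hf (g p)).1)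

lemma exists_isNClique_compl_of_card_lt [DecidableRel R.Adj] {X Y S : Finset V}
    (hX : Rᶜ.IsClique (X : Set V)) (hY : Rᶜ.IsClique (Y : Set V)) (hXY : Disjoint X Y)
    (hS : S ⊆ X) (hN : #{b ∈ Y | ∃ a ∈ S, R.Adj a b} < #S) :
    ∃ C ⊆ X ∪ Y, Rᶜ.IsNClique (#Y + 1) C := by
  set N := {b ∈ Y | ∃ a ∈ S, R.Adj a b}
  have hNY : N ⊆ Y := filter_subset _ _
  have hclique : Rᶜ.IsClique (↑(S ∪ (Y \ N)) : Set V) := by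
    rw [coe_union, SimpleGraph.IsClique, Set.pairwise_union]
    refine ⟨hX.subset (by simpa using hS), hY.subset (by simp), fun a ha b hb hab => ?_⟩
    have hb' : b ∉ N := (mem_sdiff.mp hb).2
    have hadj : Rᶜ.Adj a b :=
      ⟨hab, fun h => hb' (mem_filter.mpr ⟨(mem_sdiff.mp hb).1, a, ha, h⟩)⟩
    exact ⟨hadj, hadj.symm⟩
  have hcard : #Y + 1 ≤ #(S ∪ (Y \ N)) := by
    rw [card_union_of_disjoint (disjoint_of_subset_left hS (hXY.mono_right sdiff_subset)),
      card_sdiff_of_subset hNY]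
    have := card_le_card hNY
    omega
  obtain ⟨C, hCsub, hC⟩ := exists_subset_card_eq hcard
  exact ⟨C, hCsub.trans (union_subset_union hS sdiff_subset),
    hclique.subset (by exact_mod_cast hCsub), hC⟩

lemma exists_isNClique_compl_of_not_redMatchingBetween {X Y : Finset V} {k : ℕ}
    (hX : Rᶜ.IsClique (X : Set V)) (hY : Rᶜ.IsClique (Y : Set V)) (hXY : Disjoint X Y)
    (hXk : #X = k) (h : ¬ RedMatchingBetween R X Y k) :
    ∃ C ⊆ X ∪ Y, Rᶜ.IsNClique (#Y + 1) C := by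
  classical
  by_contra hC
  refine h (redMatchingBetween_of_hall R hXY hXk fun S hS => ?_)
  by_contra! hN
  exact hC (exists_isNClique_compl_of_card_lt R hX hY hXY hS hN)

lemma redMatchingBetween_of_not_containsCopy_tK {ι : Type*} {A : ι → Finset V} {k : ℕ}
    (hdisj : Pairwise (Disjoint on A)) (hA : ∀ a, Rᶜ.IsClique (A a : Set V))
    (P : Finset ι) (hP : ∀ a ∈ P, #(A a) = k + 1) {i j : ι} (hi : i ∉ P) (hj : j ∉ P)
    (hij : i ≠ j) (hAi : #(A i) = k) (hAj : #(A j) = k)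
    (hblue : ¬ ContainsCopy Rᶜ (tK (#P + 1) (k + 1))) :
    RedMatchingBetween R (A i) (A j) k := by
  by_contra h
  obtain ⟨C, hCsub, hC⟩ := exists_isNClique_compl_of_not_redMatchingBetween R (hA i) (hA j)
    (hdisj hij) hAi h
  rw [hAj] at hC
  have hCP : ∀ a ∈ P, Disjoint C (A a) := fun a ha => disjoint_of_subset_left hCsub <|
    disjoint_union_left.mpr ⟨hdisj (ne_of_mem_of_not_mem ha hi).symm,
      hdisj (ne_of_mem_of_not_mem ha hj).symm⟩
  refine hblue (containsCopy_tK_of_isNClique (fun o : Option P => o.elim C fun a => A a)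
    (by simp) ?_ fun o => ?_)
  · rintro (_ | a) (_ | b) hab
    · exact (hab rfl).elim
    · exact hCP b b.2
    · exact (hCP a a.2).symm
    · exact hdisj fun h => hab (congrArg some (Subtype.ext h))
  · rcases o with _ | a
    · exact hC
    · exact ⟨hA a, hP a a.2⟩

theorem disjoint_red_matchings_general (n m t : ℕ) (hm : 2 ≤ m) (ht : 2 ≤ t)
    (R : SimpleGraph (Fin ((n - 1) * (m - 1) + t - 1)))
    (hblue : ¬ ContainsCopy Rᶜ (tK t m))
    (A : Fin (n - 1) → Finset (Fin ((n - 1) * (m - 1) + t - 1)))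
    (hpart : ∀ v, ∃! i, v ∈ A i)
    (hcliques : ∀ i, ∀ u ∈ A i, ∀ v ∈ A i, ¬ R.Adj u v)
    (hsmall : ∀ i : Fin (n - 1), (i : ℕ) < n - t → (A i).card = m - 1)
    (hbig : ∀ i : Fin (n - 1), n - t ≤ (i : ℕ) → (A i).card = m) :
    (∀ i j : Fin (n - 1), (i : ℕ) < n - t → (j : ℕ) < n - t → i ≠ j →
      RedMatchingBetween R (A i) (A j) (m - 1)) ∧
    (∀ (A' : Fin (n - 1) → Finset (Fin ((n - 1) * (m - 1) + t - 1)))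
       (D : Finset (Fin (n - 1))),
      (∀ v, ∃! i, v ∈ A' i) →
      (∀ i, ∀ u ∈ A' i, ∀ v ∈ A' i, ¬ R.Adj u v) →
      D.card = t - 1 →
      (∀ k ∈ D, (A' k).card = m) →
      (∀ k ∉ D, (A' k).card = m - 1) →
      ∀ i' j' : Fin (n - 1), i' ∉ D → j' ∉ D → i' ≠ j' →
        RedMatchingBetween R (A' i') (A' j') (m - 1)) := by
  have hm1 : m - 1 + 1 = m := by omega
  have hblue' : ∀ P : Finset (Fin (n - 1)), #P = t - 1 →
      ¬ ContainsCopy Rᶜ (tK (#P + 1) (m - 1 + 1)) := fun P hP => by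
    rwa [hP, hm1, Nat.sub_add_cancel (by omega : 1 ≤ t)]
  have hblueCliques : ∀ A' : Fin (n - 1) → Finset _,
      (∀ i, ∀ u ∈ A' i, ∀ v ∈ A' i, ¬ R.Adj u v) →
      ∀ i, Rᶜ.IsClique (A' i : Set _) :=
    fun A' h i u hu v hv huv => ⟨huv, h i u hu v hv⟩
  constructor
  · intro i j hi hj hij
    let P := Ici (⟨n - t, by omega⟩ : Fin (n - 1))
    have hP : ∀ a, a ∈ P ↔ n - t ≤ a := fun a => by simp [P, Fin.le_def]
    refine redMatchingBetween_of_not_containsCopy_tK R (pairwise_disjoint_of_existsUnique_mem hpart)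
      (hblueCliques A hcliques) P (fun a ha => (hbig a ((hP a).mp ha)).trans hm1.symm)
      (by rw [hP]; omega) (by rw [hP]; omega) hij (hsmall i hi) (hsmall j hj) (hblue' P ?_)
    simp only [P, Fin.card_Ici]
    omega
  · intro A' D hpart' hcliques' hD hbig' hsmall' i j hi hj hij
    exact redMatchingBetween_of_not_containsCopy_tK R
      (pairwise_disjoint_of_existsUnique_mem hpart') (hblueCliques A' hcliques') D
      (fun a ha => (hbig' a ha).trans hm1.symm) hi hj hij (hsmall' i hi) (hsmall' j hj)
      (hblue' D hD)

/-- Claim 2.4. Under the stated partition of a tKm-blue-free coloring into blue cliques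
`A₁,…,A_{n−1}`: (1) between any two of the first `n − t` classes there are `m − 1` pairwise
vertex-disjoint red edges; (2) the analogous statement for a partition where the classes of
size `m` are indexed by an arbitrary set `D` of size `t − 1`. -/
theorem disjoint_red_matchings (n m t : ℕ) (hn : 1 ≤ n) (hm : 2 ≤ m) (ht : 2 ≤ t)
    (R : SimpleGraph (Fin ((n - 1) * (m - 1) + t - 1)))
    (hblue : ¬ ContainsCopy Rᶜ (tK t m))
    (A : Fin (n - 1) → Finset (Fin ((n - 1) * (m - 1) + t - 1)))
    (hpart : ∀ v, ∃! i, v ∈ A i)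
    (hcliques : ∀ i, ∀ u ∈ A i, ∀ v ∈ A i, ¬ R.Adj u v)
    (hsmall : ∀ i : Fin (n - 1), (i : ℕ) < n - t → (A i).card = m - 1)
    (hbig : ∀ i : Fin (n - 1), n - t ≤ (i : ℕ) → (A i).card = m) :
    (∀ i j : Fin (n - 1), (i : ℕ) < n - t → (j : ℕ) < n - t → i ≠ j →
      RedMatchingBetween R (A i) (A j) (m - 1)) ∧
    (∀ (A' : Fin (n - 1) → Finset (Fin ((n - 1) * (m - 1) + t - 1)))
       (D : Finset (Fin (n - 1))),
      (∀ v, ∃! i, v ∈ A' i) →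
      (∀ i, ∀ u ∈ A' i, ∀ v ∈ A' i, ¬ R.Adj u v) →
      D.card = t - 1 →
      (∀ k ∈ D, (A' k).card = m) →
      (∀ k ∉ D, (A' k).card = m - 1) →
      ∀ i' j' : Fin (n - 1), i' ∉ D → j' ∉ D → i' ≠ j' →
        RedMatchingBetween R (A' i') (A' j') (m - 1)) :=
  disjoint_red_matchings_general n m t hm ht R hblue A hpart hcliques hsmall hbig
end

section
/- For all positive integers m ≥ 2 and t ≥ 2 there exists n₀ such that the following holds for all n ≥ n₀. Let G be a red-blue edge-colored complete graph on (n − 1)(m − 1) + t − 1 vertices containing no red copy of the star K_{1,n−1} and no blue copy of tK_m. Suppose its vertex set is partitioned into sets A₁, …, A_{n−1}, each of size m − 1 with every edge inside each A_i blue, together with t − 1 further vertices u_{n−1}, …, u_{n−t+1}, such that for each i ∈ {1, …, t−1} every edge from u_{n−i} to A_i ∪ A_{n−i} is blue. Then for all distinct k, k' ∈ {1, …, n−1} there are m − 1 pairwise vertex-disjoint red edges between A_k and A_{k'}, and every edge between {u_{n−1}, …, u_{n−t+1}} and A₁ ∪ ⋯ ∪ A_{n−1} is blue. -/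
section AuxLemmas

variable {V : Type*}

lemma containsCopy_star_of_red {N' : ℕ} (R : SimpleGraph V) (v : V) (g : Fin N' → V)
    (hg : Function.Injective g) (hadj : ∀ r, R.Adj v (g r)) :
    ContainsCopy R (starG N') := by
  refine ⟨⟨fun o => o.elim v g, ?_⟩, ?_⟩
  · rintro (_|a) (_|b) h
    · rfl
    · exact absurd h (hadj b).ne
    · exact absurd h (hadj a).ne'
    · exact congrArg some (hg h)
  · rintro (_|a) (_|b) h
    · simp [starG, SimpleGraph.fromRel_adj] at h
    · exact hadj b
    · exact (hadj a).symm
    · simp [starG, SimpleGraph.fromRel_adj] at h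

lemma containsCopy_tK_of_cliques {t m : ℕ} (R : SimpleGraph V) (C : Fin t → Finset V)
    (hcard : ∀ s, (C s).card = m)
    (hblue : ∀ s, ∀ x ∈ C s, ∀ y ∈ C s, x ≠ y → ¬R.Adj x y)
    (hdisj : ∀ s₁ s₂ : Fin t, s₁ ≠ s₂ → ∀ x, x ∈ C s₁ → x ∈ C s₂ → False) :
    ContainsCopy Rᶜ (tK t m) := by
  classical
  have hmem : ∀ a : Fin t × Fin m,
      (((C a.1).equivFinOfCardEq (hcard a.1)).symm a.2 : V) ∈ C a.1 := fun a =>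
    (((C a.1).equivFinOfCardEq (hcard a.1)).symm a.2).2
  have hinj : Function.Injective
      (fun a : Fin t × Fin m => (((C a.1).equivFinOfCardEq (hcard a.1)).symm a.2 : V)) := by
    rintro ⟨i, j⟩ ⟨i', j'⟩ h
    dsimp only at h
    by_cases hii : i = i'
    · subst hii
      have := ((C i).equivFinOfCardEq (hcard i)).symm.injective (Subtype.coe_injective h)
      rw [this]
    · exfalso
      have h1 : (((C i').equivFinOfCardEq (hcard i')).symm j' : V) ∈ C i := by
        rw [← h]; exact hmem (i, j)
      exact hdisj i i' hii _ h1 (hmem (i', j'))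
  refine ⟨⟨_, hinj⟩, ?_⟩
  rintro ⟨i, j⟩ ⟨i', j'⟩ hadj
  rw [tK, SimpleGraph.fromRel_adj] at hadj
  obtain ⟨hne, hii⟩ := hadj
  have hii' : i = i' := hii.elim id Eq.symm
  subst hii'
  rw [SimpleGraph.compl_adj]
  constructor
  · intro h; exact hne (hinj h)
  · exact hblue i _ (hmem (i, j)) _ (hmem (i, j')) (fun h => hne (hinj h))

end AuxLemmas

lemma matching_or_blue_clique {V : Type*} [DecidableEq V] (R : SimpleGraph V)
    (X Y : Finset V) (M : ℕ)
    (hX : X.card = M) (hY : Y.card = M)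
    (hdisjXY : ∀ v, v ∈ X → v ∈ Y → False)
    (hXblue : ∀ x ∈ X, ∀ y ∈ X, ¬R.Adj x y)
    (hYblue : ∀ x ∈ Y, ∀ y ∈ Y, ¬R.Adj x y) :
    RedMatchingBetween R X Y M ∨
      ∃ S : Finset V, S.card = M + 1 ∧ (∀ x ∈ S, x ∈ X ∪ Y) ∧
        (∀ x ∈ S, ∀ y ∈ S, x ≠ y → ¬R.Adj x y) := by
  classical
  set tfun : X → Finset V := fun a => Y.filter (fun y => R.Adj a y) with htfun
  by_cases hhall : ∀ s : Finset X, s.card ≤ (s.biUnion tfun).card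
  · left
    obtain ⟨f, hfinj, hf⟩ := (Finset.all_card_le_biUnion_card_iff_exists_injective tfun).1 hhall
    have hfY : ∀ a : X, f a ∈ Y ∧ R.Adj a (f a) := by
      intro a
      have := hf a
      rw [htfun, Finset.mem_filter] at this
      exact this
    set eX : X ≃ Fin M := X.equivFinOfCardEq hX with heX
    have h1inj : Function.Injective (fun p : Fin M => (eX.symm p : V)) :=
      fun p q h => eX.symm.injective (Subtype.coe_injective h)
    have h2inj : Function.Injective (fun p : Fin M => f (eX.symm p)) :=
      fun p q h => eX.symm.injective (hfinj h)
    refine ⟨fun p => ((eX.symm p : V), f (eX.symm p)), ?_, ?_⟩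
    · exact fun p => ⟨(eX.symm p).2, (hfY _).1, (hfY _).2⟩
    · intro p q hpq
      refine ⟨h1inj.ne hpq, ?_, ?_, h2inj.ne hpq⟩
      · intro h
        dsimp only at h
        exact hdisjXY _ (eX.symm p).2 (h ▸ (hfY (eX.symm q)).1)
      · intro h
        dsimp only at h
        exact hdisjXY _ (h ▸ (eX.symm q).2) ((hfY (eX.symm p)).1)
  · right
    push_neg at hhall
    obtain ⟨s, hs⟩ := hhall
    set B : Finset V := s.biUnion tfun with hB
    have hBY : B ⊆ Y := Finset.biUnion_subset.2 fun a _ => Finset.filter_subset _ _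
    have hBcard : B.card ≤ M := hY ▸ Finset.card_le_card hBY
    set X' : Finset V := s.image Subtype.val with hX'
    have hX'sub : ∀ x ∈ X', x ∈ X := by
      intro x hx
      obtain ⟨a, _, rfl⟩ := Finset.mem_image.1 hx
      exact a.2
    have hX'card : X'.card = s.card := Finset.card_image_of_injective s Subtype.coe_injective
    set Yr : Finset V := Y \ B with hYr
    have hYrcard : Yr.card = M - B.card := by rw [hYr, Finset.card_sdiff_of_subset hBY, hY]
    have hdisj' : Disjoint X' Yr := by
      rw [Finset.disjoint_left]
      intro x hx hx'
      exact hdisjXY x (hX'sub x hx) (Finset.mem_sdiff.1 hx').1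
    have hcardS₀ : M + 1 ≤ (X' ∪ Yr).card := by
      rw [Finset.card_union_of_disjoint hdisj', hX'card, hYrcard]
      omega
    obtain ⟨S, hSsub, hScard⟩ := Finset.exists_subset_card_eq hcardS₀
    have hSmem : ∀ x ∈ S, x ∈ X' ∪ Yr := fun x hx => hSsub hx
    have hcross : ∀ x ∈ X', ∀ y ∈ Yr, ¬R.Adj x y := by
      intro x hx y hy hadj
      obtain ⟨a, ha, rfl⟩ := Finset.mem_image.1 hx
      have : y ∈ B := Finset.mem_biUnion.2 ⟨a, ha, Finset.mem_filter.2 ⟨(Finset.mem_sdiff.1 hy).1, hadj⟩⟩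
      exact (Finset.mem_sdiff.1 hy).2 this
    refine ⟨S, hScard, ?_, ?_⟩
    · intro x hx
      rcases Finset.mem_union.1 (hSmem x hx) with h | h
      · exact Finset.mem_union_left _ (hX'sub x h)
      · exact Finset.mem_union_right _ (Finset.mem_sdiff.1 h).1
    · intro x hx y hy hxy hadj
      rcases Finset.mem_union.1 (hSmem x hx) with h1 | h1 <;>
        rcases Finset.mem_union.1 (hSmem y hy) with h2 | h2
      · exact hXblue x (hX'sub x h1) y (hX'sub y h2) hadj
      · exact hcross x h1 y h2 hadj
      · exact hcross y h2 x h1 hadj.symm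
      · exact hYblue x (Finset.mem_sdiff.1 h1).1 y (Finset.mem_sdiff.1 h2).1 hadj

/-- Claim 2.6. For large `n`: in a coloring with no red `K_{1,n−1}` and no blue `tK_m`, whose
vertices are partitioned into blue cliques `A₁,…,A_{n−1}` of size `m − 1` together with `t − 1`
further vertices `u_{n−1},…,u_{n−t+1}` (here `u i` is the paper's `u_{n−(i+1)}`) such that every
edge from `u_{n−i}` to `Aᵢ ∪ A_{n−i}` is blue, all pairs of classes are joined by `m − 1`
disjoint red edges and all edges from the `u`'s to the classes are blue. -/
theorem blue_attached_structure (m t : ℕ) (hm : 2 ≤ m) (ht : 2 ≤ t) :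
    ∃ n₀ : ℕ, ∀ n : ℕ, n₀ ≤ n →
      ∀ R : SimpleGraph (Fin ((n - 1) * (m - 1) + t - 1)),
        ¬ ContainsCopy R (starG (n - 1)) →
        ¬ ContainsCopy Rᶜ (tK t m) →
        ∀ (A : Fin (n - 1) → Finset (Fin ((n - 1) * (m - 1) + t - 1)))
          (u : Fin (t - 1) → Fin ((n - 1) * (m - 1) + t - 1)),
          (∀ v, ((∃! i, v ∈ A i) ∧ ∀ i, v ≠ u i) ∨ ((∃! i, v = u i) ∧ ∀ i, v ∉ A i)) →
          (∀ i, (A i).card = m - 1) →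
          (∀ i, ∀ w ∈ A i, ∀ w' ∈ A i, ¬ R.Adj w w') →
          (∀ (i : Fin (t - 1)) (j : Fin (n - 1)),
            ((j : ℕ) = (i : ℕ) ∨ (j : ℕ) + (i : ℕ) + 2 = n) →
            ∀ w ∈ A j, ¬ R.Adj (u i) w) →
          (∀ k k' : Fin (n - 1), k ≠ k' → RedMatchingBetween R (A k) (A k') (m - 1)) ∧
          (∀ (i : Fin (t - 1)) (j : Fin (n - 1)), ∀ w ∈ A j, ¬ R.Adj (u i) w) := by
  classical
  refine ⟨3 * t + 3 * m + 10, ?_⟩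
  intro n hn R hstar hblueG A u hpart hcardA hAblue hu
  -- Partition facts
  have P1 : ∀ {k k' : Fin (n - 1)}, k ≠ k' →
      ∀ {v}, v ∈ A k → v ∈ A k' → False := by
    intro k k' hkk v hv hv'
    rcases hpart v with ⟨⟨i, hi, huniq⟩, _⟩ | ⟨_, hnot⟩
    · exact hkk ((huniq k hv).trans (huniq k' hv').symm)
    · exact hnot k hv
  have P2 : ∀ i j, u i ∉ A j := by
    intro i j hmem
    rcases hpart (u i) with ⟨_, hne⟩ | ⟨_, hnot⟩
    · exact hne i rfl
    · exact hnot j hmem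
  have P3 : ∀ i i', u i = u i' → i = i' := by
    intro i i' h
    rcases hpart (u i) with ⟨_, hne⟩ | ⟨⟨i₀, hi₀, huniq⟩, _⟩
    · exact absurd rfl (hne i)
    · exact (huniq i rfl).trans (huniq i' h).symm
  -- Key contradiction: a blue K_m inside A k ∪ A k' plus a good assignment yields blue tK_m
  have KEY : ∀ (S : Finset (Fin ((n - 1) * (m - 1) + t - 1))) (k k' : Fin (n - 1)),
      S.card = m → (∀ x ∈ S, x ∈ A k ∪ A k') →
      (∀ x ∈ S, ∀ y ∈ S, x ≠ y → ¬R.Adj x y) →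
      ∀ j : Fin (t - 1) → Fin (n - 1), Function.Injective j →
      (∀ i', j i' ≠ k ∧ j i' ≠ k') →
      (∀ i', ∀ w ∈ A (j i'), ¬R.Adj (u i') w) → False := by
    intro S k k' hScard hSsub hSblue j hjinj hjne hjblue
    set C : Fin t → Finset (Fin ((n - 1) * (m - 1) + t - 1)) := fun s =>
      if h : (s : ℕ) < t - 1 then insert (u ⟨s, h⟩) (A (j ⟨s, h⟩)) else S with hC
    apply hblueG
    apply containsCopy_tK_of_cliques R C
    · intro s
      rw [hC]; dsimp only
      split
      · rw [Finset.card_insert_of_notMem (P2 _ _), hcardA]; omega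
      · exact hScard
    · intro s x hx y hy hxy
      rw [hC] at hx hy; dsimp only at hx hy
      split at hx
      · next h =>
        rw [dif_pos h] at hy
        rcases Finset.mem_insert.1 hx with rfl | hx
        · rcases Finset.mem_insert.1 hy with rfl | hy
          · exact absurd rfl hxy
          · exact hjblue _ _ hy
        · rcases Finset.mem_insert.1 hy with rfl | hy
          · exact fun hadj => hjblue _ _ hx hadj.symm
          · exact hAblue _ _ hx _ hy
      · next h =>
        rw [dif_neg h] at hy
        exact hSblue x hx y hy hxy
    · intro s₁ s₂ hne x hx₁ hx₂
      rw [hC] at hx₁ hx₂; dsimp only at hx₁ hx₂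
      have hvalne : (s₁ : ℕ) ≠ (s₂ : ℕ) := fun h => hne (Fin.ext h)
      split at hx₁
      · next h1 =>
        split at hx₂
        · next h2 =>
          rcases Finset.mem_insert.1 hx₁ with rfl | hx₁
          · rcases Finset.mem_insert.1 hx₂ with heq | hx₂
            · have h3 := P3 _ _ heq
              rw [Fin.mk.injEq] at h3
              exact hvalne h3
            · exact P2 _ _ hx₂
          · rcases Finset.mem_insert.1 hx₂ with rfl | hx₂
            · exact P2 _ _ hx₁
            · refine P1 (fun h => hvalne ?_) hx₁ hx₂
              have h3 := hjinj h
              rw [Fin.mk.injEq] at h3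
              exact h3
        · next h2 =>
          rcases Finset.mem_insert.1 hx₁ with rfl | hx₁
          · rcases Finset.mem_union.1 (hSsub _ hx₂) with h | h
            · exact P2 _ _ h
            · exact P2 _ _ h
          · rcases Finset.mem_union.1 (hSsub _ hx₂) with h | h
            · exact P1 (hjne _).1 hx₁ h
            · exact P1 (hjne _).2 hx₁ h
      · next h1 =>
        split at hx₂
        · next h2 =>
          rcases Finset.mem_insert.1 hx₂ with rfl | hx₂
          · rcases Finset.mem_union.1 (hSsub _ hx₁) with h | h
            · exact P2 _ _ h
            · exact P2 _ _ h
          · rcases Finset.mem_union.1 (hSsub _ hx₁) with h | h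
            · exact P1 (hjne _).1 hx₂ h
            · exact P1 (hjne _).2 hx₂ h
        · next h2 =>
          have hs₁ := s₁.isLt
          have hs₂ := s₂.isLt
          omega
  -- Matching from a good assignment
  have MATCH : ∀ k k' : Fin (n - 1), k ≠ k' →
      ∀ j : Fin (t - 1) → Fin (n - 1), Function.Injective j →
      (∀ i', j i' ≠ k ∧ j i' ≠ k') →
      (∀ i', ∀ w ∈ A (j i'), ¬R.Adj (u i') w) →
      RedMatchingBetween R (A k) (A k') (m - 1) := by
    intro k k' hkk j hjinj hjne hjblue
    rcases matching_or_blue_clique R (A k) (A k') (m - 1) (hcardA k) (hcardA k')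
      (fun v hv hv' => P1 hkk hv hv') (hAblue k) (hAblue k') with hM | ⟨S, hScard, hSsub, hSblue⟩
    · exact hM
    · exact absurd (KEY S k k' (by omega) hSsub hSblue j hjinj hjne hjblue) not_false
  -- A class all of whose pairs are matched has all its vertices blue to every u
  have BLUEU : ∀ q : Fin (n - 1),
      (∀ r : Fin (n - 1), r ≠ q → RedMatchingBetween R (A q) (A r) (m - 1)) →
      ∀ v ∈ A q, ∀ i, ¬R.Adj (u i) v := by
    intro q hmatch v hv i hadj
    have hnbr : ∀ r : Fin (n - 1), ∃ y,
        (r ≠ q → y ∈ A r ∧ R.Adj v y) ∧ (r = q → y = u i) := by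
      intro r
      by_cases hr : r = q
      · exact ⟨u i, fun h => absurd hr h, fun _ => rfl⟩
      · obtain ⟨e, he1, he2⟩ := hmatch r hr
        have hinj1 : Function.Injective fun p => (e p).1 := by
          intro p p' h
          by_contra hpp
          exact (he2 p p' hpp).1 h
        have himg : (Finset.univ.image fun p => (e p).1) = A q := by
          apply Finset.eq_of_subset_of_card_le
          · intro x hx
            obtain ⟨p, _, rfl⟩ := Finset.mem_image.1 hx
            exact (he1 p).1
          · rw [Finset.card_image_of_injective _ hinj1, Finset.card_univ, Fintype.card_fin,
              hcardA]
        have hvmem : v ∈ Finset.univ.image fun p => (e p).1 := himg ▸ hv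
        obtain ⟨p, _, hp⟩ := Finset.mem_image.1 hvmem
        exact ⟨(e p).2, fun _ => ⟨(he1 p).2.1, hp ▸ (he1 p).2.2⟩, fun h => absurd h hr⟩
    choose g hg using hnbr
    apply hstar
    apply containsCopy_star_of_red R v g
    · intro r r' h
      by_cases hr : r = q <;> by_cases hr' : r' = q
      · rw [hr, hr']
      · exfalso
        rw [(hg r).2 hr] at h
        exact P2 i r' (h ▸ ((hg r').1 hr').1)
      · exfalso
        rw [(hg r').2 hr'] at h
        exact P2 i r (h.symm ▸ ((hg r).1 hr).1)
      · by_contra hrr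
        exact P1 hrr ((hg r).1 hr).1 (h ▸ ((hg r').1 hr').1)
    · intro r
      by_cases hr : r = q
      · rw [(hg r).2 hr]; exact hadj.symm
      · exact ((hg r).1 hr).2
  -- unstuck pairs are matched
  have UNSTUCK : ∀ k k' : Fin (n - 1), k ≠ k' →
      (∀ i' : Fin (t - 1), ¬(((k : ℕ) = (i' : ℕ) ∧ (k' : ℕ) + (i' : ℕ) + 2 = n) ∨
        ((k' : ℕ) = (i' : ℕ) ∧ (k : ℕ) + (i' : ℕ) + 2 = n))) →
      RedMatchingBetween R (A k) (A k') (m - 1) := by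
    intro k k' hkk hstuck
    have hkn := k.isLt
    have hk'n := k'.isLt
    refine MATCH k k' hkk (fun i' => if (i' : ℕ) = (k : ℕ) ∨ (i' : ℕ) = (k' : ℕ)
      then ⟨n - 2 - (i' : ℕ), by omega⟩ else ⟨(i' : ℕ), by have := i'.isLt; omega⟩) ?_ ?_ ?_
    · intro a b h
      have ha := a.isLt
      have hb := b.isLt
      dsimp only at h
      split_ifs at h with h1 h2 h2 <;>
        · rw [Fin.mk.injEq] at h
          exact Fin.ext (by omega)
    · intro i'
      have hi' := i'.isLt
      split_ifs with hc
      · constructor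
        · intro heq
          have hv : n - 2 - (i' : ℕ) = (k : ℕ) := congrArg Fin.val heq
          rcases hc with hc | hc
          · omega
          · exact hstuck i' (Or.inr ⟨hc.symm, by omega⟩)
        · intro heq
          have hv : n - 2 - (i' : ℕ) = (k' : ℕ) := congrArg Fin.val heq
          rcases hc with hc | hc
          · exact hstuck i' (Or.inl ⟨hc.symm, by omega⟩)
          · omega
      · push_neg at hc
        constructor
        · intro heq
          exact hc.1 (congrArg Fin.val heq)
        · intro heq
          exact hc.2 (congrArg Fin.val heq)
    · intro i' w hw
      have hi' := i'.isLt
      by_cases hc : (i' : ℕ) = (k : ℕ) ∨ (i' : ℕ) = (k' : ℕ)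
      · rw [if_pos hc] at hw
        exact hu i' _ (Or.inr (show n - 2 - (i' : ℕ) + (i' : ℕ) + 2 = n by omega)) w hw
      · rw [if_neg hc] at hw
        exact hu i' _ (Or.inl rfl) w hw
  -- the reference class q₀
  have hq₀lt : t - 1 < n - 1 := by omega
  set q₀ : Fin (n - 1) := ⟨t - 1, hq₀lt⟩ with hq₀
  have huq₀ : ∀ v ∈ A q₀, ∀ i, ¬R.Adj (u i) v := by
    apply BLUEU q₀
    intro r hr
    apply UNSTUCK q₀ r (Ne.symm hr)
    intro i'
    have hi' := i'.isLt
    have hq₀v : (q₀ : ℕ) = t - 1 := rfl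
    rintro (⟨h1, h2⟩ | ⟨h1, h2⟩) <;> omega
  -- Goal 1
  have GOAL1 : ∀ k k' : Fin (n - 1), k ≠ k' → RedMatchingBetween R (A k) (A k') (m - 1) := by
    intro k k' hkk
    by_cases hstuck : ∀ i' : Fin (t - 1), ¬(((k : ℕ) = (i' : ℕ) ∧ (k' : ℕ) + (i' : ℕ) + 2 = n) ∨
        ((k' : ℕ) = (i' : ℕ) ∧ (k : ℕ) + (i' : ℕ) + 2 = n))
    · exact UNSTUCK k k' hkk hstuck
    · push_neg at hstuck
      obtain ⟨i₀, hi₀⟩ := hstuck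
      have hi₀lt := i₀.isLt
      have hkn := k.isLt
      have hk'n := k'.isLt
      have hkval : ((k : ℕ) = (i₀ : ℕ) ∧ (k' : ℕ) = n - 2 - (i₀ : ℕ)) ∨
          ((k' : ℕ) = (i₀ : ℕ) ∧ (k : ℕ) = n - 2 - (i₀ : ℕ)) := by
        rcases hi₀ with ⟨h1, h2⟩ | ⟨h1, h2⟩
        · exact Or.inl ⟨h1, by omega⟩
        · exact Or.inr ⟨h1, by omega⟩
      refine MATCH k k' hkk (fun i' => if i' = i₀ then q₀
        else ⟨(i' : ℕ), by have := i'.isLt; omega⟩) ?_ ?_ ?_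
      · intro a b h
        have ha := a.isLt
        have hb := b.isLt
        dsimp only at h
        split_ifs at h with h1 h2 h2
        · rw [h1, h2]
        · have hv : t - 1 = (b : ℕ) := congrArg Fin.val h
          exact absurd hv (by omega)
        · have hv : (a : ℕ) = t - 1 := congrArg Fin.val h
          exact absurd hv (by omega)
        · rw [Fin.mk.injEq] at h
          exact Fin.ext h
      · intro i'
        have hi' := i'.isLt
        split_ifs with hc
        · constructor
          · intro heq
            have hv : t - 1 = (k : ℕ) := congrArg Fin.val heq
            rcases hkval with ⟨h1, h2⟩ | ⟨h1, h2⟩ <;> omega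
          · intro heq
            have hv : t - 1 = (k' : ℕ) := congrArg Fin.val heq
            rcases hkval with ⟨h1, h2⟩ | ⟨h1, h2⟩ <;> omega
        · have hcc : (i' : ℕ) ≠ (i₀ : ℕ) := fun hv => hc (Fin.ext hv)
          constructor
          · intro heq
            have hv : (i' : ℕ) = (k : ℕ) := congrArg Fin.val heq
            rcases hkval with ⟨h1, h2⟩ | ⟨h1, h2⟩ <;> omega
          · intro heq
            have hv : (i' : ℕ) = (k' : ℕ) := congrArg Fin.val heq
            rcases hkval with ⟨h1, h2⟩ | ⟨h1, h2⟩ <;> omega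
      · intro i' w hw
        by_cases hc : i' = i₀
        · rw [if_pos hc] at hw
          exact fun hadj => huq₀ w hw i' hadj
        · rw [if_neg hc] at hw
          exact hu i' _ (Or.inl rfl) w hw
  refine ⟨GOAL1, ?_⟩
  intro i jdx w hw
  exact fun hadj => BLUEU jdx (fun r hr => GOAL1 jdx r (Ne.symm hr)) w hw i hadj
end

section
/- For every tree T on n vertices and all positive integers α and β, at least one of the following holds: T contains a suspended path on α vertices; T contains β pairwise vertex-disjoint end-edges; or T contains a talon with ⌊n/(4αβ)⌋ edges, i.e., a vertex adjacent to at least ⌊n/(4αβ)⌋ leaves of T. -/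
open SimpleGraph Finset

namespace BFaux

variable {n : ℕ} {T : SimpleGraph (Fin n)}

noncomputable def wpath (hT : T.IsTree) (r v : Fin n) : T.Walk v r :=
  (hT.existsUnique_path v r).choose

lemma wpath_isPath (hT : T.IsTree) (r v : Fin n) : (wpath hT r v).IsPath :=
  (hT.existsUnique_path v r).choose_spec.1

lemma wpath_unique (hT : T.IsTree) (r v : Fin n) {p : T.Walk v r} (hp : p.IsPath) :
    p = wpath hT r v :=
  (hT.existsUnique_path v r).choose_spec.2 p hp

noncomputable def ht (hT : T.IsTree) (r v : Fin n) : ℕ := (wpath hT r v).length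

lemma ht_lt (hT : T.IsTree) (r v : Fin n) : ht hT r v < n := by
  simpa [ht] using (wpath_isPath hT r v).length_lt

lemma ht_self (hT : T.IsTree) (r : Fin n) : ht hT r r = 0 := by
  have : (Walk.nil : T.Walk r r) = wpath hT r r := wpath_unique hT r r Walk.IsPath.nil
  simpa [ht] using congrArg Walk.length this.symm

lemma eq_of_ht_zero (hT : T.IsTree) (r v : Fin n) (h : ht hT r v = 0) : v = r :=
  Walk.eq_of_length_eq_zero h

lemma ht_lt_of_mem (hT : T.IsTree) (r v : Fin n) {u : Fin n}
    (hu : u ∈ (wpath hT r v).support) (hne : u ≠ v) : ht hT r u < ht hT r v := by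
  have hdp : ((wpath hT r v).dropUntil u hu).IsPath := (wpath_isPath hT r v).dropUntil hu
  have hdeq := wpath_unique hT r u hdp
  have hspec := (wpath hT r v).take_spec hu
  have hlen := congrArg Walk.length hspec
  rw [Walk.length_append] at hlen
  have htk : 0 < ((wpath hT r v).takeUntil u hu).length := by
    rcases Nat.eq_zero_or_pos ((wpath hT r v).takeUntil u hu).length with h | h
    · exact absurd (Walk.eq_of_length_eq_zero h) hne.symm
    · exact h
  have : ht hT r u = ((wpath hT r v).dropUntil u hu).length := by
    rw [ht, ← hdeq]
  have hv : ht hT r v = (wpath hT r v).length := rfl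
  omega

lemma ht_le_of_mem (hT : T.IsTree) (r v : Fin n) {u : Fin n}
    (hu : u ∈ (wpath hT r v).support) : ht hT r u ≤ ht hT r v := by
  by_cases h : u = v
  · subst h; omega
  · exact (ht_lt_of_mem hT r v hu h).le

noncomputable def parent (hT : T.IsTree) (r v : Fin n) : Fin n :=
  (wpath hT r v).getVert 1

lemma lemA (hT : T.IsTree) {r u v : Fin n} (huv : T.Adj u v)
    (hlt : ht hT r v < ht hT r u) :
    ht hT r u = ht hT r v + 1 ∧ parent hT r u = v := by
  have hns : u ∉ (wpath hT r v).support := by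
    intro hmem
    exact absurd (ht_le_of_mem hT r v hmem) (by omega)
  have hpath : (Walk.cons huv (wpath hT r v)).IsPath :=
    (wpath_isPath hT r v).cons hns
  have heq := wpath_unique hT r u hpath
  constructor
  · have := congrArg Walk.length heq
    simpa [ht, Walk.length_cons] using this.symm
  · have := congrArg (fun p => Walk.getVert p 1) heq
    rw [parent, ← this]
    simp [Walk.getVert_cons_succ, Walk.getVert_zero]

lemma lemB (hT : T.IsTree) {r u v : Fin n} (huv : T.Adj u v) :
    ht hT r u ≠ ht hT r v := by
  intro heq
  have hne := huv.ne
  have hns : u ∉ (wpath hT r v).support := by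
    intro hmem
    exact absurd (ht_lt_of_mem hT r v hmem hne) (by omega)
  have hpath : (Walk.cons huv (wpath hT r v)).IsPath :=
    (wpath_isPath hT r v).cons hns
  have := congrArg Walk.length (wpath_unique hT r u hpath)
  simp only [Walk.length_cons] at this
  have hv : ht hT r v = (wpath hT r v).length := rfl
  have hu : ht hT r u = (wpath hT r u).length := rfl
  omega

lemma parent_adj (hT : T.IsTree) {r v : Fin n} (hv : v ≠ r) :
    T.Adj v (parent hT r v) := by
  have hpos : 0 < (wpath hT r v).length := by
    rcases Nat.eq_zero_or_pos (wpath hT r v).length with h | h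
    · exact absurd (Walk.eq_of_length_eq_zero h) hv
    · exact h
  have := (wpath hT r v).adj_getVert_succ hpos
  simpa [Walk.getVert_zero, parent] using this

lemma parent_ht (hT : T.IsTree) {r v : Fin n} (hv : v ≠ r) :
    ht hT r (parent hT r v) < ht hT r v := by
  have hpos : 0 < (wpath hT r v).length := by
    rcases Nat.eq_zero_or_pos (wpath hT r v).length with h | h
    · exact absurd (Walk.eq_of_length_eq_zero h) hv
    · exact h
  have hmem : parent hT r v ∈ (wpath hT r v).support :=
    Walk.mem_support_iff_exists_getVert.2 ⟨1, rfl, hpos⟩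
  exact ht_lt_of_mem hT r v hmem (parent_adj hT hv).symm.ne

lemma parent_uniq (hT : T.IsTree) {r u v : Fin n} (huv : T.Adj v u)
    (hlt : ht hT r u < ht hT r v) : parent hT r v = u :=
  (lemA hT huv hlt).2
variable [DecidableRel T.Adj]

noncomputable def child (hT : T.IsTree) (r v : Fin n) : Fin n :=
  if h : ((T.neighborFinset v).erase (parent hT r v)).Nonempty then h.choose else v

lemma child_spec (hT : T.IsTree) {r v : Fin n} (hd : T.degree v = 2) (hv : v ≠ r) :
    T.Adj v (child hT r v) ∧ ht hT r (child hT r v) = ht hT r v + 1 ∧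
      parent hT r (child hT r v) = v := by
  have hpmem : parent hT r v ∈ T.neighborFinset v :=
    (T.mem_neighborFinset v _).2 (parent_adj hT hv)
  have hcard : ((T.neighborFinset v).erase (parent hT r v)).card = 1 := by
    rw [Finset.card_erase_of_mem hpmem]
    have : (T.neighborFinset v).card = 2 := hd
    omega
  have hne : ((T.neighborFinset v).erase (parent hT r v)).Nonempty :=
    Finset.card_pos.1 (by omega)
  have hc : child hT r v ∈ (T.neighborFinset v).erase (parent hT r v) := by
    rw [child, dif_pos hne]; exact hne.choose_spec
  have hcp : child hT r v ≠ parent hT r v := Finset.ne_of_mem_erase hc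
  have hadj : T.Adj v (child hT r v) :=
    (T.mem_neighborFinset v _).1 (Finset.mem_of_mem_erase hc)
  refine ⟨hadj, ?_⟩
  have hneq := lemB hT (r := r) hadj
  rcases Nat.lt_or_ge (ht hT r (child hT r v)) (ht hT r v) with hlt | hge
  · exact absurd (parent_uniq hT hadj hlt).symm hcp
  · have hlt : ht hT r v < ht hT r (child hT r v) := by omega
    exact (lemA hT hadj.symm hlt).imp_left id
lemma unique_nbr {u v w : Fin n} (hd : T.degree u = 1) (hv : T.Adj u v) (hw : T.Adj u w) :
    w = v := by
  have hc : (T.neighborFinset u).card ≤ 1 := le_of_eq hd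
  exact Finset.card_le_one.1 hc _ ((T.mem_neighborFinset u w).2 hw) _
    ((T.mem_neighborFinset u v).2 hv)

lemma no_two_leaves {u v : Fin n} (hconn : T.Connected) (h3 : 3 ≤ n) (huv : T.Adj u v)
    (hu : T.degree u = 1) (hv : T.degree v = 1) : False := by
  have claim : ∀ x y : Fin n, (p : T.Walk x y) → (x = u ∨ x = v) → (y = u ∨ y = v) := by
    intro x y p
    induction p with
    | nil => exact fun h => h
    | cons hadj q ih =>
      rename_i x' z' y'
      intro hx
      apply ih
      rcases hx with hx | hx
      · subst hx; exact Or.inr (unique_nbr hu huv hadj)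
      · subst hx; exact Or.inl (unique_nbr hv huv.symm hadj)
  have hy : ∃ y : Fin n, y ≠ u ∧ y ≠ v := by
    by_contra hc
    push_neg at hc
    have hsub : (Finset.univ : Finset (Fin n)) ⊆ {u, v} := by
      intro y _
      rcases Classical.em (y = u) with h | h
      · simp [h]
      · simp [hc y h]
    have := Finset.card_le_card hsub
    have h2 : ({u, v} : Finset (Fin n)).card ≤ 2 :=
      (Finset.card_insert_le _ _).trans (by simp)
    simp only [Finset.card_univ, Fintype.card_fin] at this
    omega
  obtain ⟨y, hyu, hyv⟩ := hy
  obtain ⟨p⟩ := hconn.preconnected u y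
  rcases claim u y p (Or.inl rfl) with h | h
  · exact hyu h
  · exact hyv h

lemma degree_pos (hconn : T.Connected) (h2 : 2 ≤ n) (v : Fin n) : 0 < T.degree v := by
  rw [T.degree_pos_iff_exists_adj]
  have : ∃ u : Fin n, u ≠ v := by
    by_contra hc
    push_neg at hc
    have hsub : (Finset.univ : Finset (Fin n)) ⊆ {v} := by
      intro y _; simp [hc y]
    have := Finset.card_le_card hsub
    simp only [Finset.card_univ, Fintype.card_fin, Finset.card_singleton] at this
    omega
  obtain ⟨u, hu⟩ := this
  obtain ⟨p⟩ := hconn.preconnected v u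
  cases p with
  | nil => exact absurd rfl hu.symm
  | cons hadj q => exact ⟨_, hadj⟩

noncomputable def supp (T : SimpleGraph (Fin n)) [DecidableRel T.Adj] (v : Fin n) : Fin n :=
  if h : (T.neighborFinset v).Nonempty then h.choose else v

lemma supp_adj {v : Fin n} (hd : T.degree v = 1) : T.Adj v (supp T v) := by
  have hne : (T.neighborFinset v).Nonempty := Finset.card_pos.1 (by rw [show (T.neighborFinset v).card = 1 from hd]; omega)
  have : supp T v ∈ T.neighborFinset v := by rw [supp, dif_pos hne]; exact hne.choose_spec
  exact (T.mem_neighborFinset v _).1 this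

lemma supp_eq {v w : Fin n} (hd : T.degree v = 1) (hw : T.Adj v w) : supp T v = w := by
  have := supp_adj (T := T) hd
  exact unique_nbr hd hw this |>.symm ▸ rfl
end BFaux


set_option maxHeartbeats 1600000 in
open BFaux in
/-- **Burr–Faudree.** Every tree `T` on `n` vertices contains a suspended path on `a`
vertices, or `b` pairwise vertex-disjoint end-edges, or a talon with `⌊n/(4ab)⌋` edges. -/
theorem tree_structure (n a b : ℕ) (ha : 1 ≤ a) (hb : 1 ≤ b)
    (T : SimpleGraph (Fin n)) [DecidableRel T.Adj] (hT : T.IsTree) :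
    (∃ f : Fin a → Fin n, Function.Injective f ∧
      (∀ (i : ℕ) (h : i + 1 < a), T.Adj (f ⟨i, Nat.lt_of_succ_lt h⟩) (f ⟨i + 1, h⟩)) ∧
      (∀ (i : ℕ) (h : i < a), 0 < i → i + 1 < a → T.degree (f ⟨i, h⟩) = 2)) ∨
    (∃ g : Fin b → Fin n × Fin n,
      (∀ p, T.Adj (g p).1 (g p).2 ∧ T.degree (g p).2 = 1) ∧
      (∀ p q, p ≠ q → (g p).1 ≠ (g q).1 ∧ (g p).1 ≠ (g q).2 ∧
        (g p).2 ≠ (g q).1 ∧ (g p).2 ≠ (g q).2)) ∨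
    (∃ (x : Fin n) (h : Fin (n / (4 * a * b)) → Fin n), Function.Injective h ∧
      ∀ i, T.Adj x (h i) ∧ T.degree (h i) = 1) := by
  classical
  have hconn := hT.isConnected
  have hnon : Nonempty (Fin n) := hconn.nonempty
  by_cases hk0 : n / (4 * a * b) = 0
  · right; right
    obtain ⟨x⟩ := hnon
    refine ⟨x, fun i => (Fin.cast hk0 i).elim0, ?_, ?_⟩
    · intro i; exact (Fin.cast hk0 i).elim0
    · intro i; exact (Fin.cast hk0 i).elim0
  have hk1 : 1 ≤ n / (4 * a * b) := Nat.pos_of_ne_zero hk0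
  have hn4 : 4 * a * b ≤ n := by
    by_contra hlt
    exact hk0 (Nat.div_eq_of_lt (by omega))
  have hab1 : 4 ≤ 4 * a * b := by nlinarith
  have hn2 : 2 ≤ n := by omega
  by_cases ha1 : a = 1
  · left
    subst ha1
    obtain ⟨x⟩ := hnon
    exact ⟨fun _ => x, fun i j _ => Subsingleton.elim i j,
      fun i h => absurd h (by omega), fun i h h0 h1 => absurd h1 (by omega)⟩
  by_cases ha2 : a = 2
  · left
    subst ha2
    have h01 : (⟨0, by omega⟩ : Fin n) ≠ ⟨1, by omega⟩ := by
      intro h; exact absurd (congrArg Fin.val h) (by simp)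
    obtain ⟨p⟩ := hconn.preconnected ⟨0, by omega⟩ ⟨1, by omega⟩
    rcases p with _ | ⟨hadj, q⟩
    · rename_i w
      refine ⟨fun i => if i.val = 0 then ⟨0, by omega⟩ else w, ?_, ?_, ?_⟩
      · intro i j hij
        have hne := hadj.ne
        by_cases h1 : i.val = 0 <;> by_cases h2 : j.val = 0 <;>
          simp only [h1, h2, if_pos, if_neg, if_true, if_false] at hij <;>
          first
            | (apply Fin.ext; omega)
            | (exact absurd hij hne)
            | (exact absurd hij.symm hne)
      · intro i h
        have hi : i = 0 := by omega
        subst hi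
        simpa using hadj
      · intro i h h0 h1; omega
  have ha3 : 3 ≤ a := by omega
  have hn3 : 3 ≤ n := by omega
  set L := Finset.univ.filter (fun v => T.degree v = 1) with hLdef
  set D2 := Finset.univ.filter (fun v => T.degree v = 2) with hDdef
  set B3 := Finset.univ.filter (fun v => 3 ≤ T.degree v) with hBdef
  set S := L.image (supp T) with hSdef
  set lfN : Fin n → Finset (Fin n) :=
    fun s => (T.neighborFinset s).filter (fun v => T.degree v = 1) with hlfNdef
  have hsuppadj : ∀ v ∈ L, T.Adj v (supp T v) := by
    intro v hv
    exact supp_adj (Finset.mem_filter.1 hv).2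
  have hSnotleaf : ∀ s ∈ S, T.degree s ≠ 1 := by
    intro s hs hds
    obtain ⟨v, hv, hsv⟩ := Finset.mem_image.1 hs
    have hvd := (Finset.mem_filter.1 hv).2
    exact no_two_leaves hconn hn3 (hsv ▸ hsuppadj v hv) hvd hds
  by_cases hSb : b ≤ S.card
  · right; left
    set e := S.orderIsoOfFin rfl with hedef
    set inj : Fin b → Fin n := fun p => (e (Fin.castLE hSb p)).val with hinjdef
    have hinjS : ∀ p, inj p ∈ S := fun p => (e (Fin.castLE hSb p)).2
    have hinjinj : Function.Injective inj := by
      intro p q hpq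
      have := e.injective (Subtype.ext hpq)
      exact Fin.ext (by simpa using congrArg Fin.val this)
    have hleaf : ∀ p : Fin b, ∃ v, T.degree v = 1 ∧ supp T v = inj p := by
      intro p
      obtain ⟨v, hv, hsv⟩ := Finset.mem_image.1 (hinjS p)
      exact ⟨v, (Finset.mem_filter.1 hv).2, hsv⟩
    choose ℓ hℓ1 hℓ2 using hleaf
    refine ⟨fun p => (inj p, ℓ p), ?_, ?_⟩
    · intro p
      refine ⟨?_, hℓ1 p⟩
      have h := (supp_adj (T := T) (hℓ1 p)).symm
      rw [hℓ2 p] at h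
      exact h
    · intro p q hpq
      have h1 : inj p ≠ inj q := fun h => hpq (hinjinj h)
      have h2 : ∀ p' q' : Fin b, inj p' ≠ ℓ q' := by
        intro p' q' h
        exact hSnotleaf _ (hinjS p') (h ▸ hℓ1 q')
      have h4 : ℓ p ≠ ℓ q := by
        intro h
        exact h1 (by rw [← hℓ2 p, ← hℓ2 q, h])
      exact ⟨h1, h2 p q, fun h => h2 q p h.symm, h4⟩
  by_cases htal : ∃ s : Fin n, n / (4 * a * b) ≤ (lfN s).card
  · right; right
    obtain ⟨s, hsk⟩ := htal
    set e := (lfN s).orderIsoOfFin rfl with hedef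
    refine ⟨s, fun i => (e (Fin.castLE hsk i)).val, ?_, ?_⟩
    · intro i j hij
      have := e.injective (Subtype.ext hij)
      exact Fin.ext (by simpa using congrArg Fin.val this)
    · intro i
      have hmem := (e (Fin.castLE hsk i)).2
      simp only [hlfNdef, Finset.mem_filter, SimpleGraph.mem_neighborFinset] at hmem
      exact hmem
  -- Main case: derive the suspended path by contradiction
  left
  by_contra hnP1
  push_neg at htal
  -- a root of degree ≠ 2
  have hedges := T.sum_degrees_eq_twice_card_edges
  have hecard : T.edgeFinset.card + 1 = n := by simpa using hT.card_edgeFinset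
  have hroot : ∃ r : Fin n, T.degree r ≠ 2 := by
    by_contra hall
    push_neg at hall
    have : ∑ v : Fin n, T.degree v = ∑ _v : Fin n, 2 :=
      Finset.sum_congr rfl fun v _ => hall v
    simp only [Finset.sum_const, Finset.card_univ, Fintype.card_fin, smul_eq_mul] at this
    omega
  obtain ⟨r, hr2⟩ := hroot
  have hdegpos : ∀ v : Fin n, 0 < T.degree v := degree_pos hconn hn2
  -- the key structural claim
  have key : ∀ v : Fin n, ∃ wd : Fin n × ℕ, T.degree v = 2 →
      T.degree wd.1 ≠ 2 ∧ 1 ≤ wd.2 ∧ wd.2 + 3 ≤ a ∧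
        (fun x => parent hT r x)^[wd.2] wd.1 = v := by
    intro v
    by_cases hv2 : T.degree v = 2
    swap
    · exact ⟨(v, 0), fun h => absurd h hv2⟩
    set F : ℕ → Fin n :=
      fun i => (fun x => if T.degree x = 2 then child hT r x else x)^[i] v with hFdef
    have hF0 : F 0 = v := rfl
    have hFsucc : ∀ i, F (i + 1) =
        if T.degree (F i) = 2 then child hT r (F i) else F i := by
      intro i
      exact Function.iterate_succ_apply' (fun x => if T.degree x = 2 then child hT r x else x) i v
    have hstep : ∀ i, T.degree (F i) = 2 →
        T.Adj (F i) (F (i + 1)) ∧ ht hT r (F (i + 1)) = ht hT r (F i) + 1 ∧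
          parent hT r (F (i + 1)) = F i := by
      intro i hi
      have hne : F i ≠ r := fun h => hr2 (h ▸ hi)
      have hcs := child_spec hT hi hne
      rw [hFsucc i, if_pos hi]
      exact hcs
    have hterm : ∃ i, T.degree (F i) ≠ 2 := by
      by_contra hall
      push_neg at hall
      have hht : ∀ i, ht hT r (F i) = ht hT r v + i := by
        intro i
        induction i with
        | zero => simp [hF0]
        | succ j ih => rw [(hstep j (hall j)).2.1, ih]; omega
      have h1 := ht_lt hT r (F n)
      have h2 := hht n
      omega
    have hm1' : T.degree (F 0) = 2 := hv2
    set m := Nat.find hterm with hmdef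
    have hmspec : T.degree (F m) ≠ 2 := Nat.find_spec hterm
    have hmmin : ∀ i, i < m → T.degree (F i) = 2 := by
      intro i hi
      by_contra h
      have hle : m ≤ i := hmdef ▸ Nat.find_le h
      omega
    have hm1 : 1 ≤ m := by
      rcases Nat.eq_zero_or_pos m with h | h
      · exact absurd (h ▸ hmspec) (by simp [hm1'])
      · exact h
    have hhtF : ∀ i, i ≤ m → ht hT r (F i) = ht hT r v + i := by
      intro i
      induction i with
      | zero => intro _; simp [hF0]
      | succ j ih =>
        intro hj
        rw [(hstep j (hmmin j (by omega))).2.1, ih (by omega)]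
        omega
    have hiter : ∀ i, i ≤ m → (fun x => parent hT r x)^[i] (F m) = F (m - i) := by
      intro i
      induction i with
      | zero => intro _; simp
      | succ j ih =>
        intro hj
        rw [Function.iterate_succ_apply', ih (by omega)]
        have h1 : m - j = (m - (j + 1)) + 1 := by omega
        rw [h1]
        exact (hstep (m - (j + 1)) (hmmin _ (by omega))).2.2
    by_cases hma : m + 3 ≤ a
    · refine ⟨(F m, m), fun _ => ⟨hmspec, hm1, hma, ?_⟩⟩
      have := hiter m le_rfl
      simpa [hF0] using this
    -- otherwise build a suspended path on a vertices
    exfalso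
    apply hnP1
    have hvr : v ≠ r := fun h => hr2 (h ▸ hv2)
    have hma' : a - 2 ≤ m := by omega
    have hpht := parent_ht hT hvr
    refine ⟨fun i : Fin a => if i.val = 0 then parent hT r v else F (i.val - 1), ?_, ?_, ?_⟩
    · intro i j hij
      by_cases h1 : i.val = 0 <;> by_cases h2 : j.val = 0 <;>
        simp only [h1, h2, if_pos, if_neg, if_true, if_false] at hij
      · exact Fin.ext (by omega)
      · have := hhtF (j.val - 1) (by have := j.isLt; omega)
        rw [← hij] at this
        omega
      · have := hhtF (i.val - 1) (by have := i.isLt; omega)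
        rw [hij] at this
        omega
      · have hi := hhtF (i.val - 1) (by have := i.isLt; omega)
        have hj := hhtF (j.val - 1) (by have := j.isLt; omega)
        rw [hij] at hi
        exact Fin.ext (by omega)
    · intro i h
      by_cases h1 : i = 0
      · subst h1
        simp only [if_pos, if_neg, if_true, if_false]
        have : T.Adj (parent hT r v) (F (1 - 1)) := by
          rw [hF0]
          exact (parent_adj hT hvr).symm
        simpa using this
      · have hne0 : ((⟨i, Nat.lt_of_succ_lt h⟩ : Fin a)).val ≠ 0 := h1
        have hne0' : ((⟨i + 1, h⟩ : Fin a)).val ≠ 0 := by simp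
        simp only [if_neg hne0, if_neg hne0']
        have heq : (i + 1) - 1 = (i - 1) + 1 := by omega
        rw [heq]
        exact (hstep (i - 1) (hmmin _ (by omega))).1
    · intro i h h0 h1
      show T.degree (if ((⟨i, h⟩ : Fin a)).val = 0 then parent hT r v
        else F (((⟨i, h⟩ : Fin a)).val - 1)) = 2
      have hne0 : ((⟨i, h⟩ : Fin a)).val ≠ 0 := by
        intro hc
        simp only [Fin.val_mk] at hc
        omega
      rw [if_neg hne0]
      exact hmmin (i - 1) (by omega)
  choose wd hwd using key
  -- partition of the vertices by degree
  have hunion : L ∪ D2 ∪ B3 = Finset.univ := by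
    ext v
    simp only [Finset.mem_union, hLdef, hDdef, hBdef, Finset.mem_filter, Finset.mem_univ,
      true_and, iff_true]
    have := hdegpos v
    omega
  have hdisj1 : Disjoint L D2 := by
    rw [Finset.disjoint_left]
    intro v hv1 hv2
    simp only [hLdef, hDdef, Finset.mem_filter] at hv1 hv2
    omega
  have hdisj2 : Disjoint (L ∪ D2) B3 := by
    rw [Finset.disjoint_left]
    intro v hv1 hv2
    simp only [hLdef, hDdef, hBdef, Finset.mem_union, Finset.mem_filter] at hv1 hv2
    omega
  have hpart : L.card + D2.card + B3.card = n := by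
    have h1 : (L ∪ D2 ∪ B3).card = n := by rw [hunion]; simp
    rw [Finset.card_union_of_disjoint hdisj2, Finset.card_union_of_disjoint hdisj1] at h1
    omega
  -- handshake bound
  have hsumL : ∑ v ∈ L, T.degree v = L.card := by
    rw [Finset.sum_congr rfl (fun v hv => (Finset.mem_filter.1 hv).2)]
    simp
    rfl
  have hsumD : ∑ v ∈ D2, T.degree v = 2 * D2.card := by
    rw [Finset.sum_congr rfl (fun v hv => (Finset.mem_filter.1 hv).2)]
    simp [mul_comm]
    rfl
  have hsumB : 3 * B3.card ≤ ∑ v ∈ B3, T.degree v := by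
    have := Finset.card_nsmul_le_sum B3 (fun v => T.degree v) 3
      (fun v hv => (Finset.mem_filter.1 hv).2)
    simpa [mul_comm] using this
  have hsplit : ∑ v ∈ L, T.degree v + ∑ v ∈ D2, T.degree v + ∑ v ∈ B3, T.degree v
      = 2 * (n - 1) := by
    rw [← Finset.sum_union hdisj1, ← Finset.sum_union hdisj2, hunion]
    omega
  have hLB : B3.card + 2 ≤ L.card := by omega
  -- bound on the number of degree-2 vertices
  have hne2card : (Finset.univ.filter fun w => T.degree w ≠ 2).card = L.card + B3.card := by
    have : (Finset.univ.filter fun w => T.degree w ≠ 2) = L ∪ B3 := by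
      ext v
      simp only [Finset.mem_filter, Finset.mem_union, hLdef, hBdef, Finset.mem_univ, true_and]
      have := hdegpos v
      omega
    rw [this, Finset.card_union_of_disjoint]
    rw [Finset.disjoint_left]
    intro v hv1 hv2
    simp only [hLdef, hBdef, Finset.mem_filter] at hv1 hv2
    omega
  have hD2card : D2.card ≤ (L.card + B3.card) * (a - 3) := by
    have hinj : D2.card ≤
        ((Finset.univ.filter fun w => T.degree w ≠ 2) ×ˢ Finset.Icc 1 (a - 3)).card := by
      apply Finset.card_le_card_of_injOn wd
      · intro v hv
        have hv2 : T.degree v = 2 := (Finset.mem_filter.1 hv).2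
        obtain ⟨hw1, hw2, hw3, _⟩ := hwd v hv2
        simp only [Finset.mem_coe, Finset.mem_product, Finset.mem_filter, Finset.mem_univ, true_and,
          Finset.mem_Icc]
        exact ⟨hw1, hw2, by omega⟩
      · intro v hv v' hv' heq
        have hv2 : T.degree v = 2 := (Finset.mem_filter.1 hv).2
        have hv2' : T.degree v' = 2 := (Finset.mem_filter.1 hv').2
        have h1 := (hwd v hv2).2.2.2
        have h2 := (hwd v' hv2').2.2.2
        rw [← h1, ← h2, heq]
    rw [Finset.card_product, Nat.card_Icc, hne2card] at hinj
    have : a - 3 + 1 - 1 = a - 3 := by omega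
    rw [this] at hinj
    exact hinj
  -- bound on the number of leaves
  have hLsub : L ⊆ S.biUnion lfN := by
    intro v hv
    rw [Finset.mem_biUnion]
    refine ⟨supp T v, Finset.mem_image.2 ⟨v, hv, rfl⟩, ?_⟩
    simp only [hlfNdef, Finset.mem_filter, SimpleGraph.mem_neighborFinset]
    exact ⟨(hsuppadj v hv).symm, (Finset.mem_filter.1 hv).2⟩
  have hLcard : L.card ≤ (b - 1) * (n / (4 * a * b) - 1) := by
    calc L.card ≤ (S.biUnion lfN).card := Finset.card_le_card hLsub
      _ ≤ ∑ s ∈ S, (lfN s).card := Finset.card_biUnion_le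
      _ ≤ S.card * (n / (4 * a * b) - 1) := by
          apply Finset.sum_le_card_nsmul
          intro s _
          have := htal s
          omega
      _ ≤ (b - 1) * (n / (4 * a * b) - 1) := by
          apply Nat.mul_le_mul_right
          omega
  -- final arithmetic contradiction
  set kk := n / (4 * a * b) with hkk
  have hkn : kk * (4 * a * b) ≤ n := Nat.div_mul_le_self n (4 * a * b)
  have hLbk : L.card + 1 ≤ b * kk := by
    obtain ⟨b', rfl⟩ : ∃ b', b = b' + 1 := ⟨b - 1, by omega⟩
    obtain ⟨k', hk'⟩ : ∃ k', kk = k' + 1 := ⟨kk - 1, by omega⟩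
    rw [hk'] at hLcard ⊢
    have hexp : (b' + 1) * (k' + 1) = b' * k' + b' + k' + 1 := by ring
    simp only [Nat.add_sub_cancel] at hLcard
    omega
  have hfin1 : n ≤ (L.card + B3.card) * (a - 2) := by
    have h1 : (L.card + B3.card) * (a - 2) = (L.card + B3.card) + (L.card + B3.card) * (a - 3) := by
      have : a - 2 = (a - 3) + 1 := by omega
      rw [this]; ring
    omega
  have hfin2 : (L.card + B3.card) * (a - 2) ≤ 2 * L.card * (a - 2) :=
    Nat.mul_le_mul_right _ (by omega)
  have hfin3 : 2 * L.card * (a - 2) ≤ 2 * L.card * a := Nat.mul_le_mul_left _ (by omega)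
  have hfin4 : 2 * L.card * a < 2 * (b * kk) * a :=
    (Nat.mul_lt_mul_right (by omega : 0 < a)).mpr (by omega)
  have hcontra : n < n := by
    calc n ≤ (L.card + B3.card) * (a - 2) := hfin1
      _ ≤ 2 * L.card * (a - 2) := hfin2
      _ ≤ 2 * L.card * a := hfin3
      _ < 2 * (b * kk) * a := hfin4
      _ = 2 * (a * b * kk) := by ring
      _ ≤ 4 * (a * b * kk) := Nat.mul_le_mul_right _ (by norm_num)
      _ = kk * (4 * a * b) := by ring
      _ ≤ n := hkn
  exact absurd hcontra (lt_irrefl n)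
end

section
/- Let a, b, c, d be positive integers with a ≥ b(c − 1) + d. Consider a red-blue edge-coloring of the complete graph on the vertex set {x₁, …, x_a, y₁, …, y_b}. Suppose x₁x₂⋯x_a is a red path joining x₁ to x_a, and no red path joining x₁ and x_a has length exactly a (i.e., has exactly a edges). Then either there is a blue copy of K_c, or there are d of the vertices x_i each of which is joined by a blue edge to every y_j with j ∈ {1, …, b}. -/
set_option linter.unusedSectionVars false
open SimpleGraph
namespace PELaux

def buildWalk {V : Type*} (G : SimpleGraph V) (f : ℕ → V) :
    (n : ℕ) → (∀ k < n, G.Adj (f k) (f (k + 1))) → G.Walk (f 0) (f n)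
  | 0, _ => Walk.nil
  | n + 1, h => (buildWalk G f n fun k hk => h k (by omega)).concat (h n (by omega))

lemma buildWalk_length {V : Type*} (G : SimpleGraph V) (f : ℕ → V) :
    ∀ (n : ℕ) (h : ∀ k < n, G.Adj (f k) (f (k + 1))), (buildWalk G f n h).length = n
  | 0, _ => rfl
  | n + 1, h => by
    simp [buildWalk, Walk.length_concat, buildWalk_length G f n]

lemma buildWalk_support {V : Type*} (G : SimpleGraph V) (f : ℕ → V) :
    ∀ (n : ℕ) (h : ∀ k < n, G.Adj (f k) (f (k + 1))),
      (buildWalk G f n h).support = (List.range (n + 1)).map f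
  | 0, _ => by simp [buildWalk, List.range_succ]
  | n + 1, h => by
    simp [buildWalk, Walk.support_concat, buildWalk_support G f n,
      List.range_succ (n := n + 1)]

lemma buildWalk_isPath {V : Type*} (G : SimpleGraph V) (f : ℕ → V)
    (n : ℕ) (h : ∀ k < n, G.Adj (f k) (f (k + 1)))
    (hinj : ∀ m ≤ n, ∀ k ≤ n, f m = f k → m = k) : (buildWalk G f n h).IsPath := by
  rw [Walk.isPath_def, buildWalk_support]
  refine List.Nodup.map_on ?_ List.nodup_range
  intro m hm k hk hf
  rw [List.mem_range] at hm hk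
  exact hinj m (by omega) k (by omega) hf

section

variable {a b : ℕ} (ha : 1 ≤ a) (R : SimpleGraph (Fin a ⊕ Fin b))
  (hpath : ∀ (i : ℕ) (h : i + 1 < a),
      R.Adj (Sum.inl ⟨i, Nat.lt_of_succ_lt h⟩) (Sum.inl ⟨i + 1, h⟩))
  (hnopath : ¬ ∃ p : R.Walk (Sum.inl ⟨0, ha⟩) (Sum.inl ⟨a - 1, Nat.sub_lt ha Nat.one_pos⟩),
      p.IsPath ∧ p.length = a)

include hpath hnopath

/-- Build the length-`a` path determined by `g` (with `a` encoding the vertex `y`),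
deriving a contradiction. -/
lemma generic (y : Fin b) (g : ℕ → ℕ)
    (hg0 : g 0 = 0) (hga : g a = a - 1)
    (hgle : ∀ k ≤ a, g k ≤ a)
    (hginj : ∀ m ≤ a, ∀ k ≤ a, g m = g k → m = k)
    (hadj : ∀ k < a, ∀ (h1 : g k < a) (h2 : g (k+1) < a),
        R.Adj (Sum.inl ⟨g k, h1⟩) (Sum.inl ⟨g (k+1), h2⟩))
    (hadjy1 : ∀ k < a, g k = a → ∀ (h2 : g (k+1) < a), R.Adj (Sum.inr y) (Sum.inl ⟨g (k+1), h2⟩))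
    (hadjy2 : ∀ k < a, g (k+1) = a → ∀ (h1 : g k < a), R.Adj (Sum.inl ⟨g k, h1⟩) (Sum.inr y)) :
    False := by
  classical
  set f : ℕ → Fin a ⊕ Fin b := fun k => if h : g k < a then Sum.inl ⟨g k, h⟩ else Sum.inr y
    with hf
  have hfl : ∀ k (h : g k < a), f k = Sum.inl ⟨g k, h⟩ := fun k h => dif_pos h
  have hfr : ∀ k, ¬ g k < a → f k = Sum.inr y := fun k h => dif_neg h
  have hchain : ∀ k < a, R.Adj (f k) (f (k + 1)) := by
    intro k hk
    by_cases h1 : g k < a <;> by_cases h2 : g (k + 1) < a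
    · rw [hfl k h1, hfl (k+1) h2]; exact hadj k hk h1 h2
    · rw [hfl k h1, hfr (k+1) h2]
      exact hadjy2 k hk (by have := hgle (k+1) (by omega); omega) h1
    · rw [hfr k h1, hfl (k+1) h2]
      exact hadjy1 k hk (by have := hgle k (by omega); omega) h2
    · exact absurd (hginj k (by omega) (k+1) (by omega)
        (by have := hgle k (by omega); have := hgle (k+1) (by omega); omega)) (by omega)
  have hfinj : ∀ m ≤ a, ∀ k ≤ a, f m = f k → m = k := by
    intro m hm k hk h
    apply hginj m hm k hk
    by_cases c1 : g m < a <;> by_cases c2 : g k < a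
    · rw [hfl m c1, hfl k c2] at h
      simpa using h
    · rw [hfl m c1, hfr k c2] at h; exact absurd h (by simp)
    · rw [hfr m c1, hfl k c2] at h; exact absurd h (by simp)
    · have := hgle m hm; have := hgle k hk; omega
  have hstart : f 0 = Sum.inl ⟨0, ha⟩ := by
    rw [hfl 0 (by omega)]
    simp [hg0]
  have hend : f a = Sum.inl ⟨a - 1, Nat.sub_lt ha Nat.one_pos⟩ := by
    rw [hfl a (by omega)]
    simp [hga]
  refine hnopath ⟨(buildWalk R f a hchain).copy hstart hend, ?_, ?_⟩
  · rw [Walk.isPath_copy]; exact buildWalk_isPath R f a hchain hfinj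
  · rw [Walk.length_copy]; exact buildWalk_length R f a hchain

lemma key2 (y : Fin b) (i : ℕ) (h2 : i + 2 ≤ a)
    (hyi : R.Adj (Sum.inr y) (Sum.inl ⟨i, by omega⟩))
    (hyi1 : R.Adj (Sum.inr y) (Sum.inl ⟨i + 1, by omega⟩)) : False := by
  have hpath' : ∀ m n : ℕ, ∀ (hm : m < a) (hn : n < a), (n = m + 1 ∨ m = n + 1) →
      R.Adj (Sum.inl ⟨m, hm⟩) (Sum.inl ⟨n, hn⟩) := by
    rintro m n hm hn (rfl | rfl)
    exacts [hpath m hn, (hpath n hm).symm]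
  have hEq : ∀ (m n : ℕ) (hm : m < a) (hn : n < a), m = n →
      (Sum.inl ⟨m, hm⟩ : Fin a ⊕ Fin b) = Sum.inl ⟨n, hn⟩ := by
    rintro m n hm hn rfl; rfl
  refine generic ha R hpath hnopath y
    (fun k => if k ≤ i then k else if k = i + 1 then a else k - 1) ?_ ?_ ?_ ?_ ?_ ?_ ?_
  · simp
  · split_ifs <;> omega
  · intro k hk; split_ifs <;> omega
  · intro m hm k hk h; split_ifs at h <;> omega
  · intro k hk h1 h2'
    refine hpath' _ _ h1 h2' ?_
    split_ifs at * <;> omega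
  · intro k hk hka h2'
    have hv : (fun k => if k ≤ i then k else if k = i + 1 then a else k - 1) (k + 1) = i + 1 := by
      simp only [] at *; split_ifs at * <;> omega
    rw [hEq _ (i + 1) h2' (by omega) hv]
    exact hyi1
  · intro k hk hka h1
    have hv : (fun k => if k ≤ i then k else if k = i + 1 then a else k - 1) k = i := by
      simp only [] at *; split_ifs at * <;> omega
    rw [hEq _ i h1 (by omega) hv]
    exact hyi.symm

lemma key (y : Fin b) (i i' : ℕ) (hii : i < i') (h2 : i' + 2 ≤ a)
    (hyi : R.Adj (Sum.inr y) (Sum.inl ⟨i, by omega⟩))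
    (hyi' : R.Adj (Sum.inr y) (Sum.inl ⟨i', by omega⟩))
    (hred : R.Adj (Sum.inl ⟨i + 1, by omega⟩) (Sum.inl ⟨i' + 1, by omega⟩)) : False := by
  have hpath' : ∀ m n : ℕ, ∀ (hm : m < a) (hn : n < a), (n = m + 1 ∨ m = n + 1) →
      R.Adj (Sum.inl ⟨m, hm⟩) (Sum.inl ⟨n, hn⟩) := by
    rintro m n hm hn (rfl | rfl)
    exacts [hpath m hn, (hpath n hm).symm]
  have hEq : ∀ (m n : ℕ) (hm : m < a) (hn : n < a), m = n →
      (Sum.inl ⟨m, hm⟩ : Fin a ⊕ Fin b) = Sum.inl ⟨n, hn⟩ := by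
    rintro m n hm hn rfl; rfl
  refine generic ha R hpath hnopath y
    (fun k => if k ≤ i then k
      else if k = i + 1 then a
      else if k ≤ i' + 1 then i' + i + 2 - k
      else k - 1) ?_ ?_ ?_ ?_ ?_ ?_ ?_
  · simp
  · split_ifs <;> omega
  · intro k hk; split_ifs <;> omega
  · intro m hm k hk h; split_ifs at h <;> omega
  · intro k hk h1 h2'
    by_cases hc : k = i' + 1
    · subst hc
      have hv1 : (fun k => if k ≤ i then k else if k = i + 1 then a
          else if k ≤ i' + 1 then i' + i + 2 - k else k - 1) (i' + 1) = i + 1 := by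
        simp only []; split_ifs <;> omega
      have hv2 : (fun k => if k ≤ i then k else if k = i + 1 then a
          else if k ≤ i' + 1 then i' + i + 2 - k else k - 1) (i' + 1 + 1) = i' + 1 := by
        simp only []; split_ifs <;> omega
      rw [hEq _ (i + 1) h1 (by omega) hv1, hEq _ (i' + 1) h2' (by omega) hv2]
      exact hred
    · refine hpath' _ _ h1 h2' ?_
      split_ifs at * <;> omega
  · intro k hk hka h2'
    have hkk : k = i + 1 := by split_ifs at hka <;> omega
    have hv : (fun k => if k ≤ i then k else if k = i + 1 then a
        else if k ≤ i' + 1 then i' + i + 2 - k else k - 1) (k + 1) = i' := by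
      simp only []; split_ifs <;> omega
    rw [hEq _ i' h2' (by omega) hv]
    exact hyi'
  · intro k hk hka h1
    have hkk : k = i := by split_ifs at hka <;> omega
    have hv : (fun k => if k ≤ i then k else if k = i + 1 then a
        else if k ≤ i' + 1 then i' + i + 2 - k else k - 1) k = i := by
      simp only [] at *; split_ifs at * <;> omega
    rw [hEq _ i h1 (by omega) hv]
    exact hyi.symm

end
end PELaux

/-- **Erdős–Faudree–Rousseau–Schelp.** Let `a ≥ b(c−1)+d` and red-blue color the complete
graph on `{x₁,…,x_a} ∪ {y₁,…,y_b}`. If `x₁x₂⋯x_a` is a red path and no red path joining `x₁`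
and `x_a` has length exactly `a`, then there is a blue `K_c`, or there are `d` of the `xᵢ`'s
joined in blue to all the `yⱼ`'s. -/
theorem path_extension_lemma (a b c d : ℕ) (ha : 1 ≤ a) (hb : 1 ≤ b) (hc : 1 ≤ c)
    (hd : 1 ≤ d) (hbound : b * (c - 1) + d ≤ a)
    (R : SimpleGraph (Fin a ⊕ Fin b))
    (hpath : ∀ (i : ℕ) (h : i + 1 < a),
      R.Adj (Sum.inl ⟨i, Nat.lt_of_succ_lt h⟩) (Sum.inl ⟨i + 1, h⟩))
    (hnopath : ¬ ∃ p : R.Walk (Sum.inl ⟨0, ha⟩) (Sum.inl ⟨a - 1, Nat.sub_lt ha Nat.one_pos⟩),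
      p.IsPath ∧ p.length = a) :
    (∃ S : Finset (Fin a ⊕ Fin b), S.card = c ∧
      ∀ u ∈ S, ∀ v ∈ S, u ≠ v → ¬ R.Adj u v) ∨
    (∃ S : Finset (Fin a), S.card = d ∧
      ∀ i ∈ S, ∀ j : Fin b, ¬ R.Adj (Sum.inl i) (Sum.inr j)) := by
  classical
  by_cases hgood : d ≤
      (Finset.univ.filter fun i : Fin a => ∀ j : Fin b, ¬ R.Adj (Sum.inl i) (Sum.inr j)).card
  · right
    obtain ⟨S, hS, hScard⟩ := Finset.exists_subset_card_eq hgood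
    exact ⟨S, hScard, fun i hi j => (Finset.mem_filter.1 (hS hi)).2 j⟩
  · left
    push_neg at hgood
    have hsplit := Finset.card_filter_add_card_filter_not (s := Finset.univ)
        (p := fun i : Fin a => ∀ j : Fin b, ¬ R.Adj (Sum.inl i) (Sum.inr j))
    rw [Finset.card_univ, Fintype.card_fin] at hsplit
    set Bad := Finset.univ.filter
        (fun i : Fin a => ¬ ∀ j : Fin b, ¬ R.Adj (Sum.inl i) (Sum.inr j)) with hBad
    obtain ⟨P, hP⟩ : ∃ P, P = b * (c - 1) := ⟨_, rfl⟩
    rw [← hP] at hbound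
    have hbadcard : b * (c - 1) < Bad.card := by rw [← hP]; omega
    have hex : ∀ i ∈ Bad, ∃ j, R.Adj (Sum.inl i) (Sum.inr j) := by
      intro i hi
      rw [hBad, Finset.mem_filter] at hi
      have := hi.2
      push_neg at this
      exact this
    set F : Fin a → Fin b := fun i =>
      if h : ∃ j, R.Adj (Sum.inl i) (Sum.inr j) then h.choose else ⟨0, hb⟩ with hFdef
    have hF : ∀ i ∈ Bad, R.Adj (Sum.inl i) (Sum.inr (F i)) := by
      intro i hi
      have h := hex i hi
      simp only [hFdef, dif_pos h]
      exact h.choose_spec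
    have hmul : (Finset.univ : Finset (Fin b)).card * (c - 1) < Bad.card := by
      rw [Finset.card_univ, Fintype.card_fin]; exact hbadcard
    obtain ⟨y, -, hy⟩ := Finset.exists_lt_card_fiber_of_mul_lt_card_of_maps_to
      (f := F) (s := Bad) (t := (Finset.univ : Finset (Fin b)))
      (fun i _ => Finset.mem_univ _) hmul
    set T := Bad.filter (fun i => F i = y) with hT
    have hTadj : ∀ i ∈ T, R.Adj (Sum.inl i) (Sum.inr y) := by
      intro i hi
      rw [hT, Finset.mem_filter] at hi
      have := hF i hi.1
      rwa [hi.2] at this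
    obtain ⟨T0, hT0sub, hT0card⟩ := Finset.exists_subset_card_eq (n := c) (s := T) (by omega)
    have hT0ne : T0.Nonempty := Finset.card_pos.1 (by omega)
    set M := T0.max' hT0ne with hM
    set T1 := T0.erase M with hT1
    have hT1card : T1.card = c - 1 := by
      rw [hT1, Finset.card_erase_of_mem (T0.max'_mem hT0ne), hT0card]
    have hT1T : ∀ i ∈ T1, i ∈ T := fun i hi => hT0sub (Finset.mem_of_mem_erase hi)
    have hlt : ∀ i ∈ T1, (i : ℕ) + 2 ≤ a := by
      intro i hi
      have h1 : i ≠ M := Finset.ne_of_mem_erase hi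
      have h2 : i ≤ M := T0.le_max' i (Finset.mem_of_mem_erase hi)
      have h3 : (i : ℕ) < (M : ℕ) := Fin.lt_iff_val_lt_val.1 (lt_of_le_of_ne h2 h1)
      have h4 := M.isLt
      omega
    refine ⟨insert (Sum.inr y) (T1.attach.image fun x =>
      (Sum.inl ⟨(x.1 : ℕ) + 1, by have := hlt x.1 x.2; omega⟩ : Fin a ⊕ Fin b)), ?_, ?_⟩
    · rw [Finset.card_insert_of_notMem (by simp), Finset.card_image_of_injective _ ?_,
        Finset.card_attach, hT1card]
      · omega
      · intro x x' h
        simp only [Sum.inl.injEq, Fin.mk.injEq] at h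
        exact Subtype.ext (Fin.ext (by omega))
    · intro u hu v hv hne hadj
      rcases Finset.mem_insert.1 hu with rfl | hu' <;>
        rcases Finset.mem_insert.1 hv with rfl | hv'
      · exact hne rfl
      · obtain ⟨x, hx, rfl⟩ := Finset.mem_image.1 hv'
        exact PELaux.key2 ha R hpath hnopath y x.1 (hlt x.1 x.2)
          ((hTadj x.1 (hT1T x.1 x.2)).symm) hadj
      · obtain ⟨x, hx, rfl⟩ := Finset.mem_image.1 hu'
        exact PELaux.key2 ha R hpath hnopath y x.1 (hlt x.1 x.2)
          ((hTadj x.1 (hT1T x.1 x.2)).symm) hadj.symm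
      · obtain ⟨x, hx, rfl⟩ := Finset.mem_image.1 hu'
        obtain ⟨x', hx', rfl⟩ := Finset.mem_image.1 hv'
        have hxx : (x.1 : ℕ) ≠ (x'.1 : ℕ) := by
          intro h
          exact hne (by simp only [Sum.inl.injEq, Fin.mk.injEq]; omega)
        rcases Nat.lt_or_ge (x.1 : ℕ) (x'.1 : ℕ) with hlt' | hge
        · exact PELaux.key ha R hpath hnopath y x.1 x'.1 hlt' (hlt x'.1 x'.2)
            ((hTadj x.1 (hT1T x.1 x.2)).symm) ((hTadj x'.1 (hT1T x'.1 x'.2)).symm) hadj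
        · exact PELaux.key ha R hpath hnopath y x'.1 x.1 (by omega) (hlt x.1 x.2)
            ((hTadj x'.1 (hT1T x'.1 x'.2)).symm) ((hTadj x.1 (hT1T x.1 x.2)).symm) hadj.symm
end
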